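/- arXiv:2103.11060 — 7 statements merged into one kernel-verified Lean document; each statement's English description precedes it below -/
import Mathlib

section
/- Let U ⊆ ℝ^n be open, a > 0, k ≥ 1, and let f : U × (−a,a) → ℝ^m be of class C^k. Let r be a natural number with 1 ≤ r ≤ k. Define R_r : U × (−a,a) → ℝ^m by R_r(x,h) = (r/h^r)·∫₀^h (h−t)^{r−1} D₂^r f(x,t) dt for h ≠ 0 and R_r(x,0) = D₂^r f(x,0). Then for all (x,h) ∈ U × (−a,a), f(x,h) = Σ_{j=0}^{r−1} (h^j/j!) · D₂^j f(x,0) + (h^r/r!) · R_r(x,h), and moreover R_r is of class C^{k−r} on U × (−a,a). -/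
/-!
The identity is the one-variable Taylor formula with integral remainder, applied to
`t ↦ f (x, t)`. For the regularity, the substitution `t = s h` turns the remainder into
`R_r(x, h) = r ∫₀¹ (1 - s)^(r-1) D₂^r f(x, s h) ds`, valid also at `h = 0`. This is an integral
over a fixed compact interval of a `C^(k-r)` function of `(s, x, h)`, and differentiating under
the integral sign (with bounds from compactness) shows that it is `C^(k-r)` in `(x, h)`.
-/

open Set MeasureTheory intervalIntegral Metric
open scoped Interval Nat

universe u

section ParametricIntegral

variable {E F G : Type*} [NormedAddCommGroup E] [NormedAddCommGroup F] [NormedSpace ℝ F]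
  [NormedAddCommGroup G] {a b : ℝ} {W : Set E} {T : Set (ℝ × E)} {z₀ : E}

theorem ContinuousOn.intervalIntegrable_comp_prodMk {g : ℝ × E → G} (hg : ContinuousOn g T)
    (hWT : [[a, b]] ×ˢ W ⊆ T) {z : E} (hz : z ∈ W) :
    IntervalIntegrable (fun s => g (s, z)) volume a b :=
  ContinuousOn.intervalIntegrable <| hg.comp (by fun_prop) fun _ hs => hWT ⟨hs, hz⟩

theorem ContinuousOn.aestronglyMeasurable_comp_prodMk {g : ℝ × E → G} (hg : ContinuousOn g T)
    (hWT : [[a, b]] ×ˢ W ⊆ T) {z : E} (hz : z ∈ W) :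
    AEStronglyMeasurable (fun s => g (s, z)) (volume.restrict (Ι a b)) :=
  (hg.intervalIntegrable_comp_prodMk hWT hz).def'.aestronglyMeasurable

theorem ContinuousOn.exists_bound_uIcc_prod_closedBall [ProperSpace E] {g : ℝ × E → G}
    (hg : ContinuousOn g T) (hW : IsOpen W) (hWT : [[a, b]] ×ˢ W ⊆ T) (hz₀ : z₀ ∈ W) :
    ∃ ε > 0, closedBall z₀ ε ⊆ W ∧
      ∃ M, ∀ s ∈ [[a, b]], ∀ z ∈ closedBall z₀ ε, ‖g (s, z)‖ ≤ M := by
  obtain ⟨ε, hε, hball⟩ := nhds_basis_closedBall.mem_iff.1 (hW.mem_nhds hz₀)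
  obtain ⟨M, hM⟩ := (isCompact_uIcc.prod (isCompact_closedBall z₀ ε)).exists_bound_of_continuousOn
    (hg.mono fun w hw => hWT ⟨hw.1, hball hw.2⟩)
  exact ⟨ε, hε, hball, M, fun s hs z hz => hM (s, z) ⟨hs, hz⟩⟩

variable [ProperSpace E]

theorem continuousOn_intervalIntegral_of_continuousOn {Ψ : ℝ × E → F} (hΨ : ContinuousOn Ψ T)
    (hW : IsOpen W) (hT : IsOpen T) (hWT : [[a, b]] ×ˢ W ⊆ T) :
    ContinuousOn (fun z => ∫ s in a..b, Ψ (s, z)) W := by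
  intro z₀ hz₀
  obtain ⟨ε, hε, hball, M, hM⟩ := hΨ.exists_bound_uIcc_prod_closedBall hW hWT hz₀
  refine (continuousAt_of_dominated_interval (bound := fun _ => M) ?_ ?_ intervalIntegrable_const
    (ae_of_all _ fun s hs => ?_)).continuousWithinAt
  · filter_upwards [hW.mem_nhds hz₀] with z hz using hΨ.aestronglyMeasurable_comp_prodMk hWT hz
  · filter_upwards [closedBall_mem_nhds z₀ hε] with z hz
    exact ae_of_all _ fun s hs => hM s (uIoc_subset_uIcc hs) z hz
  · have hs' : (s, z₀) ∈ T := hWT ⟨uIoc_subset_uIcc hs, hz₀⟩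
    exact (hΨ.continuousAt (hT.mem_nhds hs')).comp (Continuous.prodMk_right s).continuousAt

variable [NormedSpace ℝ E]

noncomputable def fderivSnd (Ψ : ℝ × E → F) (w : ℝ × E) : E →L[ℝ] F :=
  (fderiv ℝ Ψ w).comp (ContinuousLinearMap.inr ℝ ℝ E)

theorem hasFDerivAt_intervalIntegral_of_contDiffOn {Ψ : ℝ × E → F} (hΨ : ContDiffOn ℝ 1 Ψ T)
    (hW : IsOpen W) (hT : IsOpen T) (hWT : [[a, b]] ×ˢ W ⊆ T) (hz₀ : z₀ ∈ W) :
    HasFDerivAt (fun z => ∫ s in a..b, Ψ (s, z)) (∫ s in a..b, fderivSnd Ψ (s, z₀)) z₀ := by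
  have hΨ' : ContinuousOn (fderivSnd Ψ) T :=
    (hΨ.continuousOn_fderiv_of_isOpen hT le_rfl).clm_comp continuousOn_const
  obtain ⟨ε, hε, hball, M, hM⟩ := hΨ'.exists_bound_uIcc_prod_closedBall hW hWT hz₀
  refine hasFDerivAt_integral_of_dominated_of_fderiv_le (F' := fun z s => fderivSnd Ψ (s, z))
    (bound := fun _ => M) (ball_mem_nhds z₀ hε) ?_
    (hΨ.continuousOn.intervalIntegrable_comp_prodMk hWT hz₀)
    (hΨ'.aestronglyMeasurable_comp_prodMk hWT hz₀) (ae_of_all _ fun s hs z hz => ?_)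
    intervalIntegrable_const (ae_of_all _ fun s hs z hz => ?_)
  · filter_upwards [hW.mem_nhds hz₀] with z hz
    exact hΨ.continuousOn.aestronglyMeasurable_comp_prodMk hWT hz
  · exact hM s (uIoc_subset_uIcc hs) z (ball_subset_closedBall hz)
  · have hsz : (s, z) ∈ T := hWT ⟨uIoc_subset_uIcc hs, hball (ball_subset_closedBall hz)⟩
    exact ((hΨ.differentiableOn one_ne_zero).differentiableAt (hT.mem_nhds hsz)).hasFDerivAt.comp
      z (hasFDerivAt_prodMk_right s z)

end ParametricIntegral

-- `E` and `F` share a universe because the induction passes from `F` to `E →L[ℝ] F`.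
theorem contDiffOn_intervalIntegral {E F : Type u} [NormedAddCommGroup E] [NormedSpace ℝ E]
    [ProperSpace E] [NormedAddCommGroup F] [NormedSpace ℝ F] {a b : ℝ} {W : Set E}
    {T : Set (ℝ × E)} {p : ℕ} {Ψ : ℝ × E → F} (hΨ : ContDiffOn ℝ p Ψ T)
    (hW : IsOpen W) (hT : IsOpen T) (hWT : [[a, b]] ×ˢ W ⊆ T) :
    ContDiffOn ℝ p (fun z => ∫ s in a..b, Ψ (s, z)) W := by
  induction p generalizing F with
  | zero => exact contDiffOn_zero.2 (continuousOn_intervalIntegral_of_continuousOn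
      hΨ.continuousOn hW hT hWT)
  | succ p ih =>
    have hderiv := fun z (hz : z ∈ W) =>
      hasFDerivAt_intervalIntegral_of_contDiffOn (hΨ.of_le (by norm_cast; omega)) hW hT hWT hz
    have hΨ' : ContDiffOn ℝ p (fderivSnd Ψ) T :=
      (hΨ.fderiv_of_isOpen hT (by norm_cast)).clm_comp contDiffOn_const
    rw [Nat.cast_succ, contDiffOn_succ_iff_fderiv_of_isOpen hW]
    exact ⟨fun z hz => (hderiv z hz).differentiableAt.differentiableWithinAt, by simp,
      (ih hΨ').congr fun z hz => (hderiv z hz).fderiv⟩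

section DerivSnd

variable {E F : Type*} [NormedAddCommGroup E] [NormedSpace ℝ E]
  [NormedAddCommGroup F] [NormedSpace ℝ F] {g : E × ℝ → F} {Ω : Set (E × ℝ)}

noncomputable def derivSnd (g : E × ℝ → F) (z : E × ℝ) : F :=
  fderiv ℝ g z (0, 1)

theorem ContDiffOn.derivSnd_of_isOpen {p : ℕ} (hg : ContDiffOn ℝ (p + 1 : ℕ) g Ω)
    (hΩ : IsOpen Ω) :
    ContDiffOn ℝ p (derivSnd g) Ω :=
  (hg.fderiv_of_isOpen hΩ (by norm_cast)).clm_apply contDiffOn_const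

theorem ContDiffOn.iterate_derivSnd {k j : ℕ} (hg : ContDiffOn ℝ k g Ω) (hΩ : IsOpen Ω)
    (hj : j ≤ k) : ContDiffOn ℝ (k - j : ℕ) (derivSnd^[j] g) Ω := by
  induction j with
  | zero => simpa using hg
  | succ j ih =>
    rw [Function.iterate_succ_apply']
    exact (ih (by omega) |>.of_le (by norm_cast; omega) : ContDiffOn ℝ (k - (j + 1) + 1 : ℕ) _ Ω)
      |>.derivSnd_of_isOpen hΩ

theorem DifferentiableAt.hasDerivAt_derivSnd {x : E} {t : ℝ} (hg : DifferentiableAt ℝ g (x, t)) :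
    HasDerivAt (fun s => g (x, s)) (derivSnd g (x, t)) t :=
  hg.hasFDerivAt.comp_hasDerivAt t ((hasDerivAt_const t x).prodMk (hasDerivAt_id t))

theorem iteratedDerivWithin_eq_iterate_derivSnd {U : Set E} {I : Set ℝ} {k j : ℕ}
    (hg : ContDiffOn ℝ k g (U ×ˢ I)) (hU : IsOpen U) (hI : IsOpen I) (hj : j ≤ k)
    {x : E} (hx : x ∈ U) {t : ℝ} (ht : t ∈ I) :
    iteratedDerivWithin j (fun s => g (x, s)) I t = derivSnd^[j] g (x, t) := by
  induction j generalizing t with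
  | zero => simp
  | succ j ih =>
    have hUI : IsOpen (U ×ˢ I) := hU.prod hI
    have hdiff : DifferentiableAt ℝ (derivSnd^[j] g) (x, t) :=
      ((hg.iterate_derivSnd hUI (by omega)).differentiableOn (by norm_cast; omega)).differentiableAt
        (hUI.mem_nhds ⟨hx, ht⟩)
    have heq : iteratedDerivWithin j (fun s => g (x, s)) I =ᶠ[nhds t]
        fun s => derivSnd^[j] g (x, s) :=
      Filter.eventuallyEq_of_mem (hI.mem_nhds ht) fun s hs => ih (by omega) hs
    rw [iteratedDerivWithin_succ, derivWithin_of_isOpen hI ht, heq.deriv_eq,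
      Function.iterate_succ_apply', hdiff.hasDerivAt_derivSnd.deriv]

end DerivSnd

theorem iteratedDerivWithin_eq_of_subset_of_isOpen {𝕜 F : Type*} [NontriviallyNormedField 𝕜]
    [NormedAddCommGroup F] [NormedSpace 𝕜 F] {f : 𝕜 → F} {s t : Set 𝕜} {n j : ℕ} {x : 𝕜}
    (hs : UniqueDiffOn 𝕜 s) (ht : IsOpen t) (hst : s ⊆ t) (hf : ContDiffOn 𝕜 n f t) (hj : j ≤ n)
    (hx : x ∈ s) : iteratedDerivWithin j f s x = iteratedDerivWithin j f t x := by
  have hfx : ContDiffAt 𝕜 j f x :=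
    (hf.contDiffAt (ht.mem_nhds (hst hx))).of_le (by exact_mod_cast hj)
  rw [iteratedDerivWithin_eq_iteratedDeriv hs hfx hx,
    iteratedDerivWithin_eq_iteratedDeriv ht.uniqueDiffOn hfx (hst hx)]

section IntegralRemainder

variable {F : Type*} [NormedAddCommGroup F] [NormedSpace ℝ F] {r : ℕ} {g : ℝ → F} {h : ℝ}

noncomputable def integralRemainder (r : ℕ) (g : ℝ → F) (h : ℝ) : F :=
  if h = 0 then g 0 else ((r : ℝ) / h ^ r) • ∫ t in (0 : ℝ)..h, (h - t) ^ (r - 1) • g t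

theorem integralRemainder_congr {g' : ℝ → F} (hgg' : EqOn g g' [[0, h]]) :
    integralRemainder r g h = integralRemainder r g' h := by
  unfold integralRemainder
  rw [hgg' left_mem_uIcc, integral_congr (fun t ht => by rw [hgg' ht])]

variable [CompleteSpace F]

theorem integralRemainder_eq_integral_unitInterval (hr : 1 ≤ r) :
    integralRemainder r g h = (r : ℝ) • ∫ s in (0 : ℝ)..1, (1 - s) ^ (r - 1) • g (s * h) := by
  unfold integralRemainder
  split_ifs with hh
  · have hmean : ∫ s in (0 : ℝ)..1, (1 - s) ^ (r - 1) = 1 / r := by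
      rw [integral_comp_sub_left (fun u => u ^ (r - 1)), integral_pow]
      push_cast [Nat.cast_sub hr]
      simp
    subst hh
    simp only [mul_zero]
    rw [intervalIntegral.integral_smul_const, hmean, smul_smul,
      mul_one_div_cancel (by positivity), one_smul]
  · have hweight : ∀ t, (1 - t / h) ^ (r - 1) • g t = (h ^ (r - 1))⁻¹ • ((h - t) ^ (r - 1) • g t) :=
      fun t => by rw [smul_smul, ← inv_pow, ← mul_pow]; field_simp
    have hsub := integral_comp_mul_right (fun t => (1 - t / h) ^ (r - 1) • g t) hh (a := 0) (b := 1)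
    simp only [mul_div_cancel_right₀ _ hh, zero_mul, one_mul, hweight,
      intervalIntegral.integral_smul] at hsub
    rw [hsub, smul_smul, smul_smul, div_eq_mul_inv, mul_assoc, ← mul_inv, ← pow_succ',
      Nat.sub_add_cancel hr]

theorem taylor_integralRemainder {f : ℝ → F} {s : Set ℝ} (hr : 1 ≤ r) (hs : IsOpen s)
    (hf : ContDiffOn ℝ r f s) (hhs : [[0, h]] ⊆ s) :
    f h = ∑ j ∈ Finset.range r, (h ^ j / j !) • iteratedDerivWithin j f s 0 +
      (h ^ r / r !) • integralRemainder r (iteratedDerivWithin r f s) h := by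
  obtain ⟨q, rfl⟩ : ∃ q, r = q + 1 := ⟨r - 1, by omega⟩
  rcases eq_or_ne h 0 with rfl | hh
  · simp [integralRemainder, Finset.sum_range_succ']
  have hderiv : ∀ j ≤ q + 1, ∀ t ∈ [[0, h]],
      iteratedDerivWithin j f [[0, h]] t = iteratedDerivWithin j f s t := fun j hj t ht =>
    iteratedDerivWithin_eq_of_subset_of_isOpen (uniqueDiffOn_uIcc hh.symm) hs hhs hf hj ht
  have htaylor := taylor_integral_remainder (hf.mono hhs)
  rw [taylor_within_apply, sub_eq_iff_eq_add'] at htaylor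
  rw [htaylor, integralRemainder, if_neg hh, smul_smul, ← intervalIntegral.integral_smul]
  congr 1
  · refine Finset.sum_congr rfl fun j hj => ?_
    rw [hderiv j (by simp at hj; omega) 0 left_mem_uIcc, sub_zero, div_eq_inv_mul]
  · refine integral_congr fun t ht => ?_
    simp only [hderiv (q + 1) le_rfl t ht, smul_smul, add_tsub_cancel_right]
    congr 1
    rw [Nat.factorial_succ]
    push_cast
    field_simp

end IntegralRemainder

section RemainderSmoothness

theorem mk_mul_mem_prod_Ioo {E : Type*} {U : Set E} {a : ℝ} {z : E × ℝ}
    (hz : z ∈ U ×ˢ Ioo (-a) a) {s : ℝ} (hs : s ∈ Icc (0 : ℝ) 1) :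
    (z.1, s * z.2) ∈ U ×ˢ Ioo (-a) a := by
  refine ⟨hz.1, ?_⟩
  have hz2 : |z.2| < a := abs_lt.2 hz.2
  rw [mem_Ioo, ← abs_lt, abs_mul]
  calc |s| * |z.2| ≤ 1 * |z.2| := by
        gcongr
        exact abs_le.2 ⟨by linarith [hs.1], hs.2⟩
    _ < a := by rwa [one_mul]

variable {E F : Type u} [NormedAddCommGroup E] [NormedSpace ℝ E] [ProperSpace E]
  [NormedAddCommGroup F] [NormedSpace ℝ F] [CompleteSpace F]

theorem ContDiffOn.integralRemainder {p r : ℕ} {G : E × ℝ → F} {Ω : Set (E × ℝ)}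
    (hG : ContDiffOn ℝ p G Ω) (hΩ : IsOpen Ω)
    (hΩ_star : ∀ z ∈ Ω, ∀ s ∈ Icc (0 : ℝ) 1, (z.1, s * z.2) ∈ Ω) (hr : 1 ≤ r) :
    ContDiffOn ℝ p (fun z => integralRemainder r (fun t => G (z.1, t)) z.2) Ω := by
  set Ψ : ℝ × (E × ℝ) → F := fun w => (1 - w.1) ^ (r - 1) • G (w.2.1, w.1 * w.2.2)
  set T : Set (ℝ × (E × ℝ)) := (fun w => (w.2.1, w.1 * w.2.2)) ⁻¹' Ω
  have hT : IsOpen T := hΩ.preimage (by fun_prop)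
  have hΩT : [[0, 1]] ×ˢ Ω ⊆ T := fun w hw =>
    hΩ_star w.2 hw.2 w.1 (by simpa [uIcc_of_le zero_le_one] using hw.1)
  have hΨ : ContDiffOn ℝ p Ψ T :=
    (by fun_prop : ContDiff ℝ p fun w : ℝ × (E × ℝ) => (1 - w.1) ^ (r - 1)).contDiffOn.smul
      (hG.comp (by fun_prop : ContDiff ℝ p fun w : ℝ × (E × ℝ) => (w.2.1, w.1 * w.2.2)).contDiffOn
        fun _ hw => hw)
  exact ((contDiffOn_intervalIntegral hΨ hΩ hT hΩT).const_smul (r : ℝ)).congr fun z _ =>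
    integralRemainder_eq_integral_unitInterval hr

end RemainderSmoothness

theorem taylor_parameterized_integral_remainder_general
    {n m : ℕ} (U : Set (EuclideanSpace ℝ (Fin n))) (hU : IsOpen U)
    (a : ℝ) (k : ℕ)
    (f : EuclideanSpace ℝ (Fin n) × ℝ → EuclideanSpace ℝ (Fin m))
    (hf : ContDiffOn ℝ k f (U ×ˢ Ioo (-a) a))
    (r : ℕ) (hr1 : 1 ≤ r) (hrk : r ≤ k)
    (R : EuclideanSpace ℝ (Fin n) × ℝ → EuclideanSpace ℝ (Fin m))
    (hR : ∀ (x : EuclideanSpace ℝ (Fin n)) (h : ℝ), h ≠ 0 →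
      R (x, h) = ((r : ℝ) / h ^ r) •
        ∫ t in (0 : ℝ)..h, ((h - t) ^ (r - 1)) •
          iteratedDerivWithin r (fun s => f (x, s)) (Ioo (-a) a) t)
    (hR0 : ∀ x : EuclideanSpace ℝ (Fin n),
      R (x, 0) = iteratedDerivWithin r (fun s => f (x, s)) (Ioo (-a) a) 0) :
    (∀ x ∈ U, ∀ h ∈ Ioo (-a) a,
      f (x, h) =
        (∑ j ∈ Finset.range r, (h ^ j / (j.factorial : ℝ)) •
            iteratedDerivWithin j (fun s => f (x, s)) (Ioo (-a) a) 0) +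
          (h ^ r / (r.factorial : ℝ)) • R (x, h)) ∧
    ContDiffOn ℝ (k - r : ℕ) R (U ×ˢ Ioo (-a) a) := by
  have hΩ : IsOpen (U ×ˢ Ioo (-a) a) := hU.prod isOpen_Ioo
  have hR_eq : ∀ z, R z =
      integralRemainder r (iteratedDerivWithin r (fun s => f (z.1, s)) (Ioo (-a) a)) z.2 := by
    rintro ⟨x, h⟩
    by_cases hh : h = 0
    · simp [integralRemainder, hh, hR0]
    · simp [integralRemainder, hh, hR x h hh]
  have hsub : ∀ h ∈ Ioo (-a) a, [[0, h]] ⊆ Ioo (-a) a := fun h hh =>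
    ordConnected_Ioo.uIcc_subset ⟨by linarith [hh.1, hh.2], by linarith [hh.1, hh.2]⟩ hh
  refine ⟨fun x hx h hh => ?_, ?_⟩
  · rw [hR_eq]
    have hfx : ContDiffOn ℝ k (fun s => f (x, s)) (Ioo (-a) a) :=
      hf.comp (by fun_prop) fun _ ht => ⟨hx, ht⟩
    exact taylor_integralRemainder hr1 isOpen_Ioo (hfx.of_le (by exact_mod_cast hrk)) (hsub h hh)
  · refine ((hf.iterate_derivSnd hΩ hrk).integralRemainder hΩ
      (fun _ hz _ hs => mk_mul_mem_prod_Ioo hz hs) hr1).congr fun z hz => ?_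
    rw [hR_eq]
    exact integralRemainder_congr fun t ht =>
      iteratedDerivWithin_eq_iterate_derivSnd hf hU isOpen_Ioo hrk hz.1 (hsub z.2 hz.2 ht)

/-- Parameterized Taylor theorem (Whitney): a `C^k` function `f` on `U × (−a,a)` equals its
Taylor polynomial of order `r−1` in the second variable plus `(h^r/r!)` times the integral
remainder `R_r`, and the remainder is of class `C^{k−r}`. -/
theorem taylor_parameterized_integral_remainder
    {n m : ℕ} (U : Set (EuclideanSpace ℝ (Fin n))) (hU : IsOpen U)
    (a : ℝ) (ha : 0 < a) (k : ℕ) (hk : 1 ≤ k)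
    (f : EuclideanSpace ℝ (Fin n) × ℝ → EuclideanSpace ℝ (Fin m))
    (hf : ContDiffOn ℝ k f (U ×ˢ Ioo (-a) a))
    (r : ℕ) (hr1 : 1 ≤ r) (hrk : r ≤ k)
    (R : EuclideanSpace ℝ (Fin n) × ℝ → EuclideanSpace ℝ (Fin m))
    (hR : ∀ (x : EuclideanSpace ℝ (Fin n)) (h : ℝ), h ≠ 0 →
      R (x, h) = ((r : ℝ) / h ^ r) •
        ∫ t in (0 : ℝ)..h, ((h - t) ^ (r - 1)) •
          iteratedDerivWithin r (fun s => f (x, s)) (Ioo (-a) a) t)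
    (hR0 : ∀ x : EuclideanSpace ℝ (Fin n),
      R (x, 0) = iteratedDerivWithin r (fun s => f (x, s)) (Ioo (-a) a) 0) :
    (∀ x ∈ U, ∀ h ∈ Ioo (-a) a,
      f (x, h) =
        (∑ j ∈ Finset.range r, (h ^ j / (j.factorial : ℝ)) •
            iteratedDerivWithin j (fun s => f (x, s)) (Ioo (-a) a) 0) +
          (h ^ r / (r.factorial : ℝ)) • R (x, h)) ∧
    ContDiffOn ℝ (k - r : ℕ) R (U ×ˢ Ioo (-a) a) :=
  taylor_parameterized_integral_remainder_general U hU a k f hf r hr1 hrk R hR hR0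
end

section
/- Let U ⊆ ℝ^n be open, a > 0, k ≥ 1, and let f₁, f₂ : U × (−a,a) → ℝ^m be of class C^k. Let r be a natural number with 1 ≤ r ≤ k, and suppose there is a continuous function δf : U × (−a,a) → ℝ^m with f₂(x,h) − f₁(x,h) = h^r · δf(x,h) for all (x,h). Then δf(x,h) = (1/r!)·(R_{r,2}(x,h) − R_{r,1}(x,h)) for all (x,h) ∈ U × (−a,a), where R_{r,j} is the order-r Taylor remainder of f_j in the variable h at h = 0 (given by R_{r,j}(x,h) = (r/h^r)·∫₀^h (h−t)^{r−1} D₂^r f_j(x,t) dt for h ≠ 0 and R_{r,j}(x,0) = D₂^r f_j(x,0)); in particular δf is of class C^{k−r} on U × (−a,a). -/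
open Set

noncomputable section

open Filter Topology MeasureTheory intervalIntegral

/-!
Put `g = f₂ - f₁`, so that `g (x, h) = h ^ r • δf (x, h)`.

Smoothness: by Hadamard's lemma, a `C^(j+1)` function `η` vanishing on `h = 0` equals
`h • ∫₀¹ ∂ₕη (x, s h) ds`, whose second factor is `C^j`. Dividing `g` by `h` in this way `r` times
gives a `C^(k-r)` function that agrees with `δf` off `h = 0`, hence everywhere by continuity.

Formula: fix `x` and let `u = g (x, ·)`. Integration by parts gives
`∫₀ʰ (h - t)^j u⁽ʲ⁺¹⁾(t) dt = j! u(h)` as long as `u⁽ⁱ⁾(0) = 0` for `i ≤ j`. The substitution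
`t = s h` writes the left side as `h^(j+1)` times a continuous function of `h` with value
`u⁽ʲ⁺¹⁾(0) / (j+1)` at `0`, while the right side is `j! h^r δ(h)`; comparing the two at `h = 0`
gives `u⁽ʲ⁺¹⁾(0) = (j+1)! 0^(r-j-1) δ(0)`. This keeps the induction going up to `j = r - 1`,
where it identifies the remainder with `r! δ`.
-/

section ParametricIntegral

variable {X E G : Type*} [NormedAddCommGroup X] [NormedSpace ℝ X] [FiniteDimensional ℝ X]
  [NormedAddCommGroup E] [NormedSpace ℝ E] [NormedAddCommGroup G]
  {S : Set (X × ℝ)} {c d : ℝ} {p₀ : X}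

theorem exists_mem_nhds_prod_uIcc_subset_bound {φ : X × ℝ → G} (hS : IsOpen S)
    (hφ : ContinuousOn φ S) (hp₀ : ∀ s ∈ uIcc c d, (p₀, s) ∈ S) :
    ∃ K ∈ 𝓝 p₀, K ×ˢ uIcc c d ⊆ S ∧ ∃ C, ∀ q ∈ K ×ˢ uIcc c d, ‖φ q‖ ≤ C := by
  obtain ⟨V, V', hV, -, hp₀V, hIccV, hVS⟩ := generalized_tube_lemma isCompact_singleton
    isCompact_uIcc hS (by rintro ⟨p, s⟩ ⟨rfl, hs⟩; exact hp₀ s hs)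
  obtain ⟨K, hK, hKV, hKc⟩ := local_compact_nhds (hV.mem_nhds (hp₀V rfl))
  have hKS : K ×ˢ uIcc c d ⊆ S := (prod_mono hKV hIccV).trans hVS
  exact ⟨K, hK, hKS, (hKc.prod isCompact_uIcc).exists_bound_of_continuousOn (hφ.mono hKS)⟩

theorem continuousOn_intervalIntegral_of_continuousOn_s2 {W : Set X} {F : X × ℝ → E}
    (hS : IsOpen S) (hWS : W ×ˢ uIcc c d ⊆ S) (hF : ContinuousOn F S) :
    ContinuousOn (fun p => ∫ s in c..d, F (p, s)) W := by
  intro p₀ hp₀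
  obtain ⟨K, hK, hKS, C, hC⟩ :=
    exists_mem_nhds_prod_uIcc_subset_bound hS hF fun s hs => hWS ⟨hp₀, hs⟩
  refine ContinuousAt.continuousWithinAt <| continuousAt_of_dominated_interval
    (F := fun p s => F (p, s)) (bound := fun _ => C) ?_ ?_ intervalIntegrable_const ?_
  · filter_upwards [hK] with p hp
    refine (ContinuousOn.mono ?_ uIoc_subset_uIcc).aestronglyMeasurable measurableSet_uIoc
    exact hF.comp (by fun_prop) fun s hs => hKS ⟨hp, hs⟩
  · filter_upwards [hK] with p hp
    exact Eventually.of_forall fun s hs => hC (p, s) ⟨hp, uIoc_subset_uIcc hs⟩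
  · refine Eventually.of_forall fun s hs => ?_
    exact ContinuousAt.comp (f := fun p => (p, s))
      (hF.continuousAt (hS.mem_nhds (hWS ⟨hp₀, uIoc_subset_uIcc hs⟩))) (by fun_prop)

theorem hasFDerivAt_intervalIntegral_of_contDiffOn_s2 {F : X × ℝ → E} (hS : IsOpen S)
    (hF : ContDiffOn ℝ 1 F S) (hp₀ : ∀ s ∈ uIcc c d, (p₀, s) ∈ S) :
    HasFDerivAt (fun p => ∫ s in c..d, F (p, s))
      (∫ s in c..d, (fderiv ℝ F (p₀, s)).comp (ContinuousLinearMap.inl ℝ X ℝ)) p₀ := by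
  have hF' : ContinuousOn (fun q => (fderiv ℝ F q).comp (ContinuousLinearMap.inl ℝ X ℝ)) S :=
    ((hF.continuousOn_fderiv_of_isOpen hS le_rfl).clm_comp continuousOn_const)
  obtain ⟨K, hK, hKS, C, hC⟩ := exists_mem_nhds_prod_uIcc_subset_bound hS hF' hp₀
  have hFK : ∀ p ∈ K, ContinuousOn (fun s => F (p, s)) (uIcc c d) := fun p hp =>
    hF.continuousOn.comp (by fun_prop) fun s hs => hKS ⟨hp, hs⟩
  have hp₀K : p₀ ∈ K := mem_of_mem_nhds hK
  refine hasFDerivAt_integral_of_dominated_of_fderiv_le (bound := fun _ => C) hK ?_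
    (hFK p₀ hp₀K).intervalIntegrable
    ((hF'.comp (by fun_prop) fun s hs => hKS ⟨hp₀K, hs⟩).mono uIoc_subset_uIcc
      |>.aestronglyMeasurable measurableSet_uIoc)
    (Eventually.of_forall fun s hs p hp => hC (p, s) ⟨hp, uIoc_subset_uIcc hs⟩)
    intervalIntegrable_const
    (Eventually.of_forall fun s hs p hp => ?_)
  · filter_upwards [hK] with p hp
    exact (hFK p hp).mono uIoc_subset_uIcc
      |>.aestronglyMeasurable measurableSet_uIoc
  · have hq : (p, s) ∈ S := hKS ⟨hp, uIoc_subset_uIcc hs⟩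
    exact ((hF.differentiableOn one_ne_zero (p, s) hq).differentiableAt (hS.mem_nhds hq))
      |>.hasFDerivAt.comp p (hasFDerivAt_prodMk_left p s)

theorem contDiffOn_intervalIntegral_of_contDiffOn [CompleteSpace E] {W : Set X} {m : ℕ}
    {F : X × ℝ → E} (hS : IsOpen S) (hW : IsOpen W) (hWS : W ×ˢ uIcc c d ⊆ S)
    (hF : ContDiffOn ℝ m F S) :
    ContDiffOn ℝ m (fun p => ∫ s in c..d, F (p, s)) W := by
  have hp : ∀ p ∈ W, ∀ s ∈ uIcc c d, (p, s) ∈ S := fun p hp s hs => hWS ⟨hp, hs⟩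
  induction m generalizing F with
  | zero =>
    rw [CharP.cast_eq_zero, contDiffOn_zero] at hF ⊢
    exact continuousOn_intervalIntegral_of_continuousOn_s2 hS hWS hF
  | succ m ih =>
    rw [Nat.cast_add_one] at hF ⊢
    have hderiv := fun p hpW =>
      hasFDerivAt_intervalIntegral_of_contDiffOn_s2 hS (hF.of_le le_add_self) (hp p hpW)
    rw [contDiffOn_succ_iff_fderiv_of_isOpen hW, contDiffOn_clm_apply]
    refine ⟨fun p hpW => (hderiv p hpW).differentiableAt.differentiableWithinAt, by simp,
      fun y => ?_⟩
    have hFy : ContDiffOn ℝ m (fun q => fderiv ℝ F q (y, 0)) S :=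
      ((contDiffOn_succ_iff_fderiv_of_isOpen hS).1 hF).2.2.clm_apply contDiffOn_const
    refine (ih hFy).congr fun p hpW => ?_
    rw [(hderiv p hpW).fderiv, ContinuousLinearMap.intervalIntegral_apply]
    · rfl
    · refine ContinuousOn.intervalIntegrable ?_
      exact ((hF.continuousOn_fderiv_of_isOpen hS le_add_self).clm_comp continuousOn_const).comp
        (by fun_prop) fun s hs => hp p hpW s hs

end ParametricIntegral

section RealLine

variable {E : Type*} [NormedAddCommGroup E] [NormedSpace ℝ E] {I : Set ℝ}

theorem StarConvex.uIcc_zero_subset (hI0 : StarConvex ℝ 0 I) {h : ℝ} (hh : h ∈ I) :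
    uIcc 0 h ⊆ I := by
  rw [← segment_eq_uIcc]
  exact hI0.segment_subset hh

theorem StarConvex.mul_mem_of_mem_uIcc (hI0 : StarConvex ℝ 0 I) {h s : ℝ} (hh : h ∈ I)
    (hs : s ∈ uIcc 0 1) : s * h ∈ I := by
  rw [uIcc_of_le zero_le_one] at hs
  exact hI0.smul_mem hh hs.1 hs.2

theorem eqOn_of_pow_smul_eqOn {f g : ℝ → E} {n : ℕ} (hI : IsOpen I) (hf : ContinuousOn f I)
    (hg : ContinuousOn g I) (hfg : ∀ t ∈ I, t ^ n • f t = t ^ n • g t) : EqOn f g I := by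
  refine EqOn.of_subset_closure (s := I ∩ {0}ᶜ) (fun t ht => ?_) hf hg inter_subset_left
    ((dense_compl_singleton 0).open_subset_closure_inter hI)
  exact smul_right_injective E (pow_ne_zero n ht.2) (hfg t ht.1)

end RealLine

section Hadamard

variable {X E : Type*} [NormedAddCommGroup X] [NormedSpace ℝ X] [NormedAddCommGroup E]
  [NormedSpace ℝ E] {U : Set X} {I : Set ℝ}

theorem hasDerivAt_comp_mk_mul {η : X × ℝ → E} {x : X} {s h : ℝ}
    (hη : DifferentiableAt ℝ η (x, s * h)) :
    HasDerivAt (fun s => η (x, s * h)) (h • fderiv ℝ η (x, s * h) (0, 1)) s := by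
  have hline : HasDerivAt (fun s : ℝ => (x, s * h)) ((0 : X), h) s :=
    (hasDerivAt_const s x).prodMk (by simpa using (hasDerivAt_id s).mul_const h)
  have hdir : ((0 : X), h) = h • ((0 : X), (1 : ℝ)) := by
    rw [Prod.smul_mk, smul_zero, smul_eq_mul, mul_one]
  have := hη.hasFDerivAt.comp_hasDerivAt s hline
  rwa [hdir, map_smul] at this

variable [FiniteDimensional ℝ X] [CompleteSpace E]

theorem exists_contDiffOn_eq_smul_of_eq_zero (hU : IsOpen U) (hI : IsOpen I)
    (hI0 : StarConvex ℝ 0 I) {η : X × ℝ → E} {m : ℕ} (hη : ContDiffOn ℝ (m + 1) η (U ×ˢ I))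
    (hη0 : ∀ x ∈ U, η (x, 0) = 0) :
    ∃ η' : X × ℝ → E, ContDiffOn ℝ m η' (U ×ˢ I) ∧ ∀ p ∈ U ×ˢ I, η p = p.2 • η' p := by
  have hS : IsOpen (U ×ˢ I) := hU.prod hI
  have hmem : ∀ p ∈ U ×ˢ I, ∀ s ∈ uIcc (0 : ℝ) 1, (p.1, s * p.2) ∈ U ×ˢ I :=
    fun p hp s hs => ⟨hp.1, hI0.mul_mem_of_mem_uIcc hp.2 hs⟩
  set D : X × ℝ → E := fun q => fderiv ℝ η q (0, 1)
  have hD : ContDiffOn ℝ m D (U ×ˢ I) :=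
    ((contDiffOn_succ_iff_fderiv_of_isOpen hS).1 hη).2.2.clm_apply contDiffOn_const
  refine ⟨fun p => ∫ s in (0 : ℝ)..1, D (p.1, s * p.2), ?_, ?_⟩
  · have hS' : IsOpen {q : (X × ℝ) × ℝ | (q.1.1, q.2 * q.1.2) ∈ U ×ˢ I} :=
      hS.preimage (by fun_prop)
    exact contDiffOn_intervalIntegral_of_contDiffOn (F := fun q => D (q.1.1, q.2 * q.1.2)) hS' hS
      (fun q hq => hmem q.1 hq.1 q.2 hq.2)
      (hD.comp (f := fun q : (X × ℝ) × ℝ => (q.1.1, q.2 * q.1.2)) (by fun_prop) fun _ hq => hq)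
  · rintro ⟨x, h⟩ hp
    have hderiv : ∀ s ∈ uIcc (0 : ℝ) 1,
        HasDerivAt (fun s => η (x, s * h)) (h • D (x, s * h)) s := fun s hs =>
      hasDerivAt_comp_mk_mul <|
        (hη.differentiableOn (by simp) _ (hmem _ hp s hs)).differentiableAt
          (hS.mem_nhds (hmem _ hp s hs))
    have hint : IntervalIntegrable (fun s => h • D (x, s * h)) volume 0 1 :=
      ((hD.continuousOn.comp (by fun_prop) fun s hs => hmem _ hp s hs).const_smul h)
        |>.intervalIntegrable
    have hFTC := integral_eq_sub_of_hasDerivAt hderiv hint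
    rw [intervalIntegral.integral_smul, one_mul, zero_mul, hη0 x hp.1, sub_zero] at hFTC
    exact hFTC.symm

theorem contDiffOn_of_eq_pow_smul (hU : IsOpen U) (hI : IsOpen I) (hI0 : StarConvex ℝ 0 I)
    {η δ : X × ℝ → E} {m r : ℕ} (hη : ContDiffOn ℝ m η (U ×ˢ I)) (hδ : ContinuousOn δ (U ×ˢ I))
    (hfac : ∀ p ∈ U ×ˢ I, η p = p.2 ^ r • δ p) (hrm : r ≤ m) :
    ContDiffOn ℝ (m - r : ℕ) δ (U ×ˢ I) := by
  induction r generalizing δ with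
  | zero => exact hη.congr fun p hp => by rw [hfac p hp, pow_zero, one_smul]
  | succ r ih =>
    have hδ' : ContDiffOn ℝ (m - (r + 1) + 1 : ℕ) (fun p => p.2 • δ p) (U ×ˢ I) := by
      rw [show m - (r + 1) + 1 = m - r by omega]
      refine ih (continuousOn_snd.smul hδ) (fun p hp => ?_) (by omega)
      rw [hfac p hp, pow_succ, mul_smul]
    obtain ⟨η', hη', hδη'⟩ :=
      exists_contDiffOn_eq_smul_of_eq_zero hU hI hI0 (by exact_mod_cast hδ') (by simp)
    refine hη'.congr fun p hp => ?_
    have hslice : ∀ {φ : X × ℝ → E}, ContinuousOn φ (U ×ˢ I) →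
        ContinuousOn (fun t => φ (p.1, t)) I := fun hφ =>
      hφ.comp (by fun_prop) fun t ht => ⟨hp.1, ht⟩
    refine eqOn_of_pow_smul_eqOn (n := 1) hI (hslice hδ) (hslice hη'.continuousOn)
      (fun t ht => ?_) hp.2
    simpa using hδη' (p.1, t) ⟨hp.1, ht⟩

end Hadamard

section TaylorRemainder

variable {E : Type*} [NormedAddCommGroup E] [NormedSpace ℝ E] {I : Set ℝ}

/-- The remainder `R_r` of the statement. The case `h = 0` is separate because there the integral
formula has the junk value `0` (as `r / 0 ^ r = 0`). -/
def taylorRemainder (I : Set ℝ) (r : ℕ) (u : ℝ → E) (h : ℝ) : E :=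
  if h = 0 then iteratedDerivWithin r u I 0
  else ((r : ℝ) / h ^ r) • ∫ t in (0 : ℝ)..h, (h - t) ^ (r - 1) • iteratedDerivWithin r u I t

theorem taylorRemainder_sub (hI : IsOpen I) (hI0 : StarConvex ℝ 0 I) {u v : ℝ → E} {r : ℕ}
    (hu : ContDiffOn ℝ r u I) (hv : ContDiffOn ℝ r v I) {h : ℝ} (hh : h ∈ I) :
    taylorRemainder I r (u - v) h = taylorRemainder I r u h - taylorRemainder I r v h := by
  have hD : ∀ t ∈ I, iteratedDerivWithin r (u - v) I t =
      iteratedDerivWithin r u I t - iteratedDerivWithin r v I t :=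
    fun t ht => iteratedDerivWithin_sub ht hI.uniqueDiffOn (hu t ht) (hv t ht)
  have hsub := hI0.uIcc_zero_subset hh
  have hint : ∀ {f : ℝ → E}, ContDiffOn ℝ r f I → IntervalIntegrable
      (fun t => (h - t) ^ (r - 1) • iteratedDerivWithin r f I t) volume 0 h := fun hf =>
    (ContinuousOn.smul (by fun_prop) ((hf.continuousOn_iteratedDerivWithin le_rfl
      hI.uniqueDiffOn).mono hsub)).intervalIntegrable
  unfold taylorRemainder
  split_ifs with hh0
  · exact hD 0 (hh0 ▸ hh)
  · rw [← smul_sub, ← intervalIntegral.integral_sub (hint hu) (hint hv)]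
    congr 1
    refine integral_congr fun t ht => ?_
    rw [hD t (hsub ht), smul_sub]

theorem integral_pow_smul_eq_pow_smul_integral_comp_mul (v : ℝ → E) (h : ℝ) (j : ℕ) :
    ∫ t in (0 : ℝ)..h, (h - t) ^ j • v t =
      h ^ (j + 1) • ∫ s in (0 : ℝ)..1, (1 - s) ^ j • v (s * h) := by
  calc ∫ t in (0 : ℝ)..h, (h - t) ^ j • v t
      = h • ∫ s in (0 : ℝ)..1, (h - s * h) ^ j • v (s * h) := by
        have := smul_integral_comp_mul_right (f := fun t => (h - t) ^ j • v t) (a := 0) (b := 1) h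
        rw [zero_mul, one_mul] at this
        exact this.symm
    _ = h • ∫ s in (0 : ℝ)..1, h ^ j • ((1 - s) ^ j • v (s * h)) := by
        congr 1
        refine integral_congr fun s _ => ?_
        rw [smul_smul, ← mul_pow, mul_one_sub, mul_comm h s]
    _ = h ^ (j + 1) • ∫ s in (0 : ℝ)..1, (1 - s) ^ j • v (s * h) := by
        rw [intervalIntegral.integral_smul, smul_smul, _root_.pow_succ']

theorem continuousOn_integral_smul_comp_mul (hI : IsOpen I) (hI0 : StarConvex ℝ 0 I)
    {v : ℝ → E} (hv : ContinuousOn v I) (j : ℕ) :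
    ContinuousOn (fun h => ∫ s in (0 : ℝ)..1, (1 - s) ^ j • v (s * h)) I :=
  continuousOn_intervalIntegral_of_continuousOn_s2 (F := fun q => (1 - q.2) ^ j • v (q.2 * q.1))
    (S := {q : ℝ × ℝ | q.2 * q.1 ∈ I}) (hI.preimage (by fun_prop))
    (fun q hq => hI0.mul_mem_of_mem_uIcc hq.1 hq.2)
    (ContinuousOn.smul (by fun_prop) (hv.comp (by fun_prop) fun _ hq => hq))

theorem integral_one_sub_pow (j : ℕ) : ∫ s in (0 : ℝ)..1, (1 - s) ^ j = ((j : ℝ) + 1)⁻¹ := by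
  rw [intervalIntegral.integral_comp_sub_left (fun s => s ^ j), sub_self, sub_zero, integral_pow]
  simp

theorem ContDiffOn.hasDerivAt_iteratedDerivWithin {u : ℝ → E} {n j : ℕ}
    (hu : ContDiffOn ℝ n u I) (hI : IsOpen I) (hj : j < n) {t : ℝ} (ht : t ∈ I) :
    HasDerivAt (iteratedDerivWithin j u I) (iteratedDerivWithin (j + 1) u I t) t := by
  have hdiff :=
    (hu.differentiableOn_iteratedDerivWithin (by exact_mod_cast hj) hI.uniqueDiffOn) t ht
  rw [iteratedDerivWithin_succ]
  exact (hdiff.hasDerivWithinAt).hasDerivAt (hI.mem_nhds ht)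

variable [CompleteSpace E]

theorem integral_pow_succ_smul_eq_smul_integral (hI0 : StarConvex ℝ 0 I) {w w' : ℝ → E}
    (hw : ∀ t ∈ I, HasDerivAt w (w' t) t) (hw' : ContinuousOn w' I) (hw0 : w 0 = 0)
    {h : ℝ} (hh : h ∈ I) (j : ℕ) :
    ∫ t in (0 : ℝ)..h, (h - t) ^ (j + 1) • w' t =
      ((j : ℝ) + 1) • ∫ t in (0 : ℝ)..h, (h - t) ^ j • w t := by
  have hsub := hI0.uIcc_zero_subset hh
  have hibp := integral_smul_deriv_eq_deriv_smul_of_hasDerivAt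
    (u := fun t => (h - t) ^ (j + 1)) (u' := fun t => -(((j : ℝ) + 1) * (h - t) ^ j))
    (by fun_prop) (fun t ht => (hw t (hsub ht)).continuousAt.continuousWithinAt)
    (fun t _ => ((hasDerivAt_pow (j + 1) (h - t)).comp t ((hasDerivAt_id t).const_sub h))
      |>.congr_deriv (by push_cast; ring))
    (fun t ht => hw t (hsub (Ioo_subset_Icc_self ht)))
    (Continuous.intervalIntegrable (by fun_prop) _ _) (hw'.mono hsub).intervalIntegrable
  rw [hibp, sub_self, zero_pow (Nat.succ_ne_zero j), zero_smul, hw0, smul_zero, sub_zero,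
    zero_sub]
  simp_rw [neg_smul, mul_smul, intervalIntegral.integral_neg, intervalIntegral.integral_smul,
    neg_neg]

theorem apply_zero_eq_of_integral_pow_smul_eq (hI : IsOpen I) (hI0 : StarConvex ℝ 0 I)
    (h0 : (0 : ℝ) ∈ I) {w g : ℝ → E} (hw : ContinuousOn w I) (hg : ContinuousOn g I) {j : ℕ}
    (hwg : ∀ h ∈ I, ∫ t in (0 : ℝ)..h, (h - t) ^ j • w t = h ^ (j + 1) • g h) :
    w 0 = ((j : ℝ) + 1) • g 0 := by
  have hmean : EqOn (fun h => ∫ s in (0 : ℝ)..1, (1 - s) ^ j • w (s * h)) g I :=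
    eqOn_of_pow_smul_eqOn hI (continuousOn_integral_smul_comp_mul hI hI0 hw j) hg
      fun h hh => by rw [← integral_pow_smul_eq_pow_smul_integral_comp_mul, hwg h hh]
  have hmean0 := hmean h0
  simp only [mul_zero] at hmean0
  rw [← hmean0, intervalIntegral.integral_smul_const, integral_one_sub_pow, smul_smul,
    mul_inv_cancel₀ (by positivity), one_smul]

section FactorOfPower

variable {u δ : ℝ → E} {r : ℕ} (hI : IsOpen I) (hI0 : StarConvex ℝ 0 I) (h0 : (0 : ℝ) ∈ I)
  (hu : ContDiffOn ℝ r u I) (hδ : ContinuousOn δ I) (hfac : ∀ t ∈ I, u t = t ^ r • δ t)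
include hI hI0 h0 hu hδ hfac

theorem iteratedDerivWithin_succ_zero_of_integral_eq {j : ℕ} (hj : j < r)
    (hP : ∀ h ∈ I, ∫ t in (0 : ℝ)..h, (h - t) ^ j • iteratedDerivWithin (j + 1) u I t =
      (j.factorial : ℝ) • u h) :
    iteratedDerivWithin (j + 1) u I 0 =
      (((j + 1).factorial : ℝ) * 0 ^ (r - (j + 1))) • δ 0 := by
  obtain ⟨i, rfl⟩ : ∃ i, r = j + 1 + i := ⟨r - (j + 1), by omega⟩
  have hPδ : ∀ h ∈ I, ∫ t in (0 : ℝ)..h, (h - t) ^ j • iteratedDerivWithin (j + 1) u I t =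
      h ^ (j + 1) • ((j.factorial : ℝ) * h ^ i) • δ h := fun h hh => by
    rw [hP h hh, hfac h hh, smul_smul, smul_smul]
    congr 1
    ring
  rw [apply_zero_eq_of_integral_pow_smul_eq hI hI0 h0
    (hu.continuousOn_iteratedDerivWithin (by exact_mod_cast Nat.succ_le_of_lt hj) hI.uniqueDiffOn)
    (by fun_prop) hPδ, smul_smul, Nat.add_sub_cancel_left, Nat.factorial_succ]
  congr 1
  push_cast
  ring

theorem integral_pow_smul_iteratedDerivWithin_eq (j : ℕ) (hj : j < r) {h : ℝ} (hh : h ∈ I) :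
    ∫ t in (0 : ℝ)..h, (h - t) ^ j • iteratedDerivWithin (j + 1) u I t =
      (j.factorial : ℝ) • u h := by
  have hderiv : ∀ i < r, ∀ t ∈ I,
      HasDerivAt (iteratedDerivWithin i u I) (iteratedDerivWithin (i + 1) u I t) t :=
    fun i hi t ht => hu.hasDerivAt_iteratedDerivWithin hI (by exact_mod_cast hi) ht
  have hcont : ∀ i ≤ r, ContinuousOn (iteratedDerivWithin i u I) I :=
    fun i hi => hu.continuousOn_iteratedDerivWithin (by exact_mod_cast hi) hI.uniqueDiffOn
  induction j generalizing h with
  | zero =>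
    have hu0 : u 0 = 0 := by rw [hfac 0 h0, zero_pow (by omega), zero_smul]
    have hFTC := integral_eq_sub_of_hasDerivAt
      (fun t ht => hderiv 0 hj t (hI0.uIcc_zero_subset hh ht))
      ((hcont 1 hj).mono (hI0.uIcc_zero_subset hh)).intervalIntegrable
    simpa [hu0] using hFTC
  | succ j ih =>
    have hP := fun h (hh : h ∈ I) => ih (by omega) hh
    have hv0 := iteratedDerivWithin_succ_zero_of_integral_eq hI hI0 h0 hu hδ hfac (by omega) hP
    rw [zero_pow (by omega), mul_zero, zero_smul] at hv0
    rw [integral_pow_succ_smul_eq_smul_integral hI0 (hderiv (j + 1) hj) (hcont (j + 2) hj) hv0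
      hh, hP h hh, smul_smul, Nat.factorial_succ]
    congr 1
    push_cast
    ring

theorem taylorRemainder_eq_factorial_smul (hr : 1 ≤ r) {h : ℝ} (hh : h ∈ I) :
    taylorRemainder I r u h = (r.factorial : ℝ) • δ h := by
  obtain ⟨j, rfl⟩ : ∃ j, r = j + 1 := ⟨r - 1, by omega⟩
  have hP := fun h (hh : h ∈ I) =>
    integral_pow_smul_iteratedDerivWithin_eq hI hI0 h0 hu hδ hfac j (by omega) hh
  unfold taylorRemainder
  split_ifs with hh0
  · rw [hh0, iteratedDerivWithin_succ_zero_of_integral_eq hI hI0 h0 hu hδ hfac (by omega) hP,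
      Nat.sub_self, pow_zero, mul_one]
  · rw [Nat.add_sub_cancel, hP h hh, hfac h hh, smul_smul, smul_smul, Nat.factorial_succ]
    push_cast
    field_simp

end FactorOfPower

end TaylorRemainder

theorem contact_factor_eq_remainder_difference_general
    {n m : ℕ} (U : Set (EuclideanSpace ℝ (Fin n))) (hU : IsOpen U)
    (a : ℝ) (ha : 0 < a) (k : ℕ)
    (f₁ f₂ : EuclideanSpace ℝ (Fin n) × ℝ → EuclideanSpace ℝ (Fin m))
    (hf₁ : ContDiffOn ℝ k f₁ (U ×ˢ Ioo (-a) a))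
    (hf₂ : ContDiffOn ℝ k f₂ (U ×ˢ Ioo (-a) a))
    (r : ℕ) (hr1 : 1 ≤ r) (hrk : r ≤ k)
    (δf : EuclideanSpace ℝ (Fin n) × ℝ → EuclideanSpace ℝ (Fin m))
    (hδf : ContinuousOn δf (U ×ˢ Ioo (-a) a))
    (hfac : ∀ x ∈ U, ∀ h ∈ Ioo (-a) a, f₂ (x, h) - f₁ (x, h) = h ^ r • δf (x, h))
    (R₁ R₂ : EuclideanSpace ℝ (Fin n) × ℝ → EuclideanSpace ℝ (Fin m))
    (hR₁ : ∀ (x : EuclideanSpace ℝ (Fin n)) (h : ℝ), h ≠ 0 →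
      R₁ (x, h) = ((r : ℝ) / h ^ r) •
        ∫ t in (0 : ℝ)..h, ((h - t) ^ (r - 1)) •
          iteratedDerivWithin r (fun s => f₁ (x, s)) (Ioo (-a) a) t)
    (hR₁0 : ∀ x : EuclideanSpace ℝ (Fin n),
      R₁ (x, 0) = iteratedDerivWithin r (fun s => f₁ (x, s)) (Ioo (-a) a) 0)
    (hR₂ : ∀ (x : EuclideanSpace ℝ (Fin n)) (h : ℝ), h ≠ 0 →
      R₂ (x, h) = ((r : ℝ) / h ^ r) •
        ∫ t in (0 : ℝ)..h, ((h - t) ^ (r - 1)) •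
          iteratedDerivWithin r (fun s => f₂ (x, s)) (Ioo (-a) a) t)
    (hR₂0 : ∀ x : EuclideanSpace ℝ (Fin n),
      R₂ (x, 0) = iteratedDerivWithin r (fun s => f₂ (x, s)) (Ioo (-a) a) 0) :
    (∀ x ∈ U, ∀ h ∈ Ioo (-a) a,
      δf (x, h) = ((r.factorial : ℝ))⁻¹ • (R₂ (x, h) - R₁ (x, h))) ∧
    ContDiffOn ℝ (k - r : ℕ) δf (U ×ˢ Ioo (-a) a) := by
  set I := Ioo (-a) a
  have hI : IsOpen I := isOpen_Ioo
  have h0 : (0 : ℝ) ∈ I := ⟨neg_neg_of_pos ha, ha⟩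
  have hI0 : StarConvex ℝ 0 I := (convex_Ioo (-a) a).starConvex h0
  refine ⟨fun x hx h hh => ?_, contDiffOn_of_eq_pow_smul hU hI hI0 (hf₂.sub hf₁) hδf
    (fun p hp => hfac p.1 hp.1 p.2 hp.2) hrk⟩
  have hslice : ∀ {f : EuclideanSpace ℝ (Fin n) × ℝ → EuclideanSpace ℝ (Fin m)},
      ContDiffOn ℝ k f (U ×ˢ I) → ContDiffOn ℝ r (fun s => f (x, s)) I := fun hf =>
    (hf.comp (by fun_prop) fun s hs => ⟨hx, hs⟩).of_le (by exact_mod_cast hrk)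
  have hR : ∀ {R f : EuclideanSpace ℝ (Fin n) × ℝ → EuclideanSpace ℝ (Fin m)},
      (∀ h, h ≠ 0 → R (x, h) = ((r : ℝ) / h ^ r) • ∫ t in (0 : ℝ)..h,
        ((h - t) ^ (r - 1)) • iteratedDerivWithin r (fun s => f (x, s)) I t) →
      R (x, 0) = iteratedDerivWithin r (fun s => f (x, s)) I 0 →
      R (x, h) = taylorRemainder I r (fun s => f (x, s)) h := by
    intro R f hRh hR0
    unfold taylorRemainder
    split_ifs with hh0
    exacts [hh0 ▸ hR0, hRh h hh0]
  have hu : ContDiffOn ℝ r ((fun s => f₂ (x, s)) - fun s => f₁ (x, s)) I := hslice (hf₂.sub hf₁)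
  have hδ : ContinuousOn (fun s => δf (x, s)) I := hδf.comp (by fun_prop) fun s hs => ⟨hx, hs⟩
  rw [hR (hR₂ x) (hR₂0 x), hR (hR₁ x) (hR₁0 x),
    ← taylorRemainder_sub hI hI0 (hslice hf₂) (hslice hf₁) hh,
    taylorRemainder_eq_factorial_smul hI hI0 h0 hu hδ (hfac x hx) hr1 hh, smul_smul,
    inv_mul_cancel₀ (by positivity), one_smul]

/-- If two `C^k` maps on `U × (−a,a)` have order-`h^r` contact witnessed by a continuous
factor `δf`, then `δf` equals `(1/r!)` times the difference of the order-`r` integral Taylor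
remainders of the two maps in the variable `h`; in particular `δf` is of class `C^{k−r}`. -/
theorem contact_factor_eq_remainder_difference
    {n m : ℕ} (U : Set (EuclideanSpace ℝ (Fin n))) (hU : IsOpen U)
    (a : ℝ) (ha : 0 < a) (k : ℕ) (hk : 1 ≤ k)
    (f₁ f₂ : EuclideanSpace ℝ (Fin n) × ℝ → EuclideanSpace ℝ (Fin m))
    (hf₁ : ContDiffOn ℝ k f₁ (U ×ˢ Ioo (-a) a))
    (hf₂ : ContDiffOn ℝ k f₂ (U ×ˢ Ioo (-a) a))
    (r : ℕ) (hr1 : 1 ≤ r) (hrk : r ≤ k)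
    (δf : EuclideanSpace ℝ (Fin n) × ℝ → EuclideanSpace ℝ (Fin m))
    (hδf : ContinuousOn δf (U ×ˢ Ioo (-a) a))
    (hfac : ∀ x ∈ U, ∀ h ∈ Ioo (-a) a, f₂ (x, h) - f₁ (x, h) = h ^ r • δf (x, h))
    (R₁ R₂ : EuclideanSpace ℝ (Fin n) × ℝ → EuclideanSpace ℝ (Fin m))
    (hR₁ : ∀ (x : EuclideanSpace ℝ (Fin n)) (h : ℝ), h ≠ 0 →
      R₁ (x, h) = ((r : ℝ) / h ^ r) •
        ∫ t in (0 : ℝ)..h, ((h - t) ^ (r - 1)) •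
          iteratedDerivWithin r (fun s => f₁ (x, s)) (Ioo (-a) a) t)
    (hR₁0 : ∀ x : EuclideanSpace ℝ (Fin n),
      R₁ (x, 0) = iteratedDerivWithin r (fun s => f₁ (x, s)) (Ioo (-a) a) 0)
    (hR₂ : ∀ (x : EuclideanSpace ℝ (Fin n)) (h : ℝ), h ≠ 0 →
      R₂ (x, h) = ((r : ℝ) / h ^ r) •
        ∫ t in (0 : ℝ)..h, ((h - t) ^ (r - 1)) •
          iteratedDerivWithin r (fun s => f₂ (x, s)) (Ioo (-a) a) t)
    (hR₂0 : ∀ x : EuclideanSpace ℝ (Fin n),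
      R₂ (x, 0) = iteratedDerivWithin r (fun s => f₂ (x, s)) (Ioo (-a) a) 0) :
    (∀ x ∈ U, ∀ h ∈ Ioo (-a) a,
      δf (x, h) = ((r.factorial : ℝ))⁻¹ • (R₂ (x, h) - R₁ (x, h))) ∧
    ContDiffOn ℝ (k - r : ℕ) δf (U ×ˢ Ioo (-a) a) :=
  contact_factor_eq_remainder_difference_general U hU a ha k f₁ f₂ hf₁ hf₂ r hr1 hrk δf hδf hfac R₁
    R₂ hR₁ hR₁0 hR₂ hR₂0
end
end

section
/- Let U ⊆ ℝ^n be open, a > 0, k ≥ 1, and let f₁, f₂ : U × (−a,a) → ℝ^m be of class C^k. Let r be a natural number with 1 ≤ r < k, and suppose there is a continuous function δf : U × (−a,a) → ℝ^m with f₂(x,h) − f₁(x,h) = h^r · δf(x,h) for all (x,h), and that δf(x,0) = 0 for all x ∈ U. Then there exists a continuous function δ′f : U × (−a,a) → ℝ^m with f₂(x,h) − f₁(x,h) = h^{r+1} · δ′f(x,h) for all (x,h) ∈ U × (−a,a). -/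
/-!
Taylor's formula with integral remainder in the `h`-direction gives, for `g = f₂ - f₁`,
`g (x, h) = ∑_{j ≤ r} h^j / j! • ∂ₕʲ g (x, 0) + h^(r+1) • R (x, h)` with
`R (x, h) = 1/r! • ∫₀¹ (1 - s)^r • ∂ₕ^(r+1) g (x, s h) ds` jointly continuous, so `δ'f = R` works
once the coefficients vanish. They do, one at a time: if those below `j` vanish, then
`h^j • (∂ₕʲ g (x, 0) / j! + h • R_j (x, h)) = h^r • δf (x, h)`; dividing by `h^j` and letting
`h → 0` gives `∂ₕʲ g (x, 0) = 0`, because `δf (x, 0) = 0`.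
-/

open Set Filter Topology
open scoped Nat

noncomputable section

lemma mk_fst_mul_snd_mem_prod_Ioo {X : Type*} {U : Set X} {a : ℝ} {p : X × ℝ}
    (hp : p ∈ U ×ˢ Ioo (-a) a) {t : ℝ} (ht : t ∈ Icc (0 : ℝ) 1) :
    (p.1, t * p.2) ∈ U ×ˢ Ioo (-a) a := by
  refine ⟨hp.1, abs_lt.1 ?_⟩
  calc |t * p.2| = |t| * |p.2| := abs_mul t p.2
    _ ≤ 1 * |p.2| := by gcongr; exact abs_le.2 ⟨by linarith [ht.1], ht.2⟩
    _ < a := by rw [one_mul]; exact abs_lt.2 hp.2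

lemma continuousOn_intervalIntegral_smul_comp_mul_snd {X E : Type*} [TopologicalSpace X]
    [NormedAddCommGroup E] [NormedSpace ℝ E] {U : Set X} {a : ℝ} {ψ : X × ℝ → E}
    (hψ : ContinuousOn ψ (U ×ˢ Ioo (-a) a)) {c : ℝ → ℝ} (hc : Continuous c) :
    ContinuousOn (fun p : X × ℝ => ∫ t in (0 : ℝ)..1, c t • ψ (p.1, t * p.2))
      (U ×ˢ Ioo (-a) a) := by
  set S := U ×ˢ Ioo (-a) a
  -- clamping `t` to `[0, 1]` leaves the integral unchanged and keeps `(p.1, t * p.2)` in `S`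
  let clamp : ℝ → ℝ := fun t => projIcc 0 1 zero_le_one t
  rw [continuousOn_iff_continuous_domRestrict]
  have hclamp : S.domRestrict (fun p : X × ℝ => ∫ t in (0 : ℝ)..1, c t • ψ (p.1, t * p.2))
      = fun p : S => ∫ t in (0 : ℝ)..1, c t • ψ (p.1.1, clamp t * p.1.2) := by
    funext p
    refine intervalIntegral.integral_congr fun t ht => ?_
    rw [uIcc_of_le zero_le_one] at ht
    simp [clamp, projIcc_of_mem _ ht]
  rw [hclamp]
  refine intervalIntegral.continuous_parametric_intervalIntegral_of_continuous' ?_ 0 1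
  exact (hc.comp continuous_snd).smul (hψ.comp_continuous (by fun_prop)
    fun q => mk_fst_mul_snd_mem_prod_Ioo q.1.2 (projIcc 0 1 zero_le_one q.2).2)

lemma eq_zero_of_pow_smul_eq_pow_smul {E : Type*} [NormedAddCommGroup E] [NormedSpace ℝ E]
    {f g : ℝ → E} {i j : ℕ} (hij : i ≤ j)
    (hf : ContinuousAt f 0) (hg : Tendsto g (𝓝 0) (𝓝 0))
    (heq : ∀ᶠ t in 𝓝 0, t ^ i • f t = t ^ j • g t) : f 0 = 0 := by
  have hquot : ∀ᶠ t in 𝓝[≠] 0, t ^ (j - i) • g t = f t := by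
    filter_upwards [nhdsWithin_le_nhds heq, self_mem_nhdsWithin] with t ht ht0
    apply smul_right_injective E (pow_ne_zero i ht0)
    simp only [smul_smul, ← pow_add, Nat.add_sub_cancel' hij]
    exact ht.symm
  have hlim : Tendsto (fun t : ℝ => t ^ (j - i) • g t) (𝓝[≠] 0) (𝓝 0) := by
    simpa using (((continuous_pow (j - i)).tendsto 0).smul hg).mono_left nhdsWithin_le_nhds
  exact tendsto_nhds_unique (hf.tendsto.mono_left nhdsWithin_le_nhds) (hlim.congr' hquot)

variable {X E : Type*} [NormedAddCommGroup X] [NormedSpace ℝ X]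
  [NormedAddCommGroup E] [NormedSpace ℝ E]

def iteratedDerivSnd (j : ℕ) (g : X × ℝ → E) (p : X × ℝ) : E :=
  iteratedFDeriv ℝ j g p fun _ => (0, 1)

def taylorRemainderSnd (n : ℕ) (g : X × ℝ → E) (p : X × ℝ) : E :=
  (n ! : ℝ)⁻¹ • ∫ t in (0 : ℝ)..1, (1 - t) ^ n • iteratedDerivSnd (n + 1) g (p.1, t * p.2)

lemma iteratedFDeriv_apply_const_snd (j : ℕ) (g : X × ℝ → E) (p : X × ℝ) (h : ℝ) :
    iteratedFDeriv ℝ j g p (fun _ => ((0 : X), h)) = h ^ j • iteratedDerivSnd j g p := by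
  have : (fun _ : Fin j => ((0 : X), h)) = fun _ => h • ((0 : X), (1 : ℝ)) := by
    ext <;> simp
  rw [this, ContinuousMultilinearMap.map_smul_univ]
  simp [iteratedDerivSnd]

lemma continuousOn_taylorRemainderSnd {U : Set X} (hU : IsOpen U) {a : ℝ} {n : ℕ}
    {g : X × ℝ → E} (hg : ContDiffOn ℝ (n + 1) g (U ×ˢ Ioo (-a) a)) :
    ContinuousOn (taylorRemainderSnd n g) (U ×ˢ Ioo (-a) a) := by
  have hD : ContinuousOn (iteratedDerivSnd (n + 1) g) (U ×ˢ Ioo (-a) a) :=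
    (continuous_eval_const _).comp_continuousOn
      (ContinuousOn.continuousOn_iteratedFDeriv hg (hU.prod isOpen_Ioo) (by norm_cast))
  exact (continuousOn_intervalIntegral_smul_comp_mul_snd hD (by fun_prop)).const_smul _

theorem eq_sum_add_pow_smul_taylorRemainderSnd [CompleteSpace E] {U : Set X} (hU : IsOpen U)
    {a : ℝ} {n : ℕ} {g : X × ℝ → E} (hg : ContDiffOn ℝ (n + 1) g (U ×ˢ Ioo (-a) a))
    {x : X} {h : ℝ} (hx : x ∈ U) (hh : h ∈ Ioo (-a) a) :
    g (x, h) = ∑ j ∈ Finset.range (n + 1), ((j ! : ℝ)⁻¹ * h ^ j) • iteratedDerivSnd j g (x, 0)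
      + h ^ (n + 1) • taylorRemainderSnd n g (x, h) := by
  have hline : ∀ t : ℝ, ((x, 0) : X × ℝ) + t • ((0 : X), h) = (x, t * h) := by simp
  have htaylor := map_add_eq_sum_add_integral_iteratedFDeriv (x := ((x, 0) : X × ℝ))
    (y := ((0 : X), h)) (n := n) (f := g) fun t ht => by
      rw [hline]
      exact hg.contDiffAt ((hU.prod isOpen_Ioo).mem_nhds
        (mk_fst_mul_snd_mem_prod_Ioo (p := (x, h)) ⟨hx, hh⟩ ht))
  simp only [Prod.mk_add_mk, add_zero, zero_add, hline, iteratedFDeriv_apply_const_snd,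
    smul_smul] at htaylor
  simp_rw [htaylor, taylorRemainderSnd, mul_comm _ (h ^ (n + 1)), mul_smul,
    intervalIntegral.integral_smul, smul_comm (h ^ (n + 1))]

lemma iteratedDerivSnd_eq_zero_of_eq_pow_smul [CompleteSpace E] {U : Set X} (hU : IsOpen U)
    {a : ℝ} (ha : 0 < a) {r : ℕ} {g δ : X × ℝ → E}
    (hg : ContDiffOn ℝ (r + 1) g (U ×ˢ Ioo (-a) a)) (hδ : ContinuousOn δ (U ×ˢ Ioo (-a) a))
    (hfac : ∀ x ∈ U, ∀ h ∈ Ioo (-a) a, g (x, h) = h ^ r • δ (x, h))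
    (hres : ∀ x ∈ U, δ (x, 0) = 0) {x : X} (hx : x ∈ U) {j : ℕ} (hj : j ≤ r) :
    iteratedDerivSnd j g (x, 0) = 0 := by
  induction j using Nat.strong_induction_on with
  | _ j ih =>
  have hgj : ContDiffOn ℝ (j + 1) g (U ×ˢ Ioo (-a) a) :=
    hg.of_le (by exact_mod_cast Nat.succ_le_succ hj)
  have hx0 : ((x, 0) : X × ℝ) ∈ U ×ˢ Ioo (-a) a := ⟨hx, neg_neg_of_pos ha, ha⟩
  have hslice : Continuous fun t : ℝ => ((x, t) : X × ℝ) := by fun_prop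
  have hnhds : U ×ˢ Ioo (-a) a ∈ 𝓝 ((x, 0) : X × ℝ) := (hU.prod isOpen_Ioo).mem_nhds hx0
  have hR : ContinuousAt (fun t => taylorRemainderSnd j g (x, t)) 0 :=
    ((continuousOn_taylorRemainderSnd hU hgj).continuousAt hnhds).comp hslice.continuousAt
  have hδ0 : Tendsto (fun t => δ (x, t)) (𝓝 0) (𝓝 0) := by
    have hlim := (hδ.continuousAt hnhds).tendsto.comp (hslice.tendsto 0)
    rwa [hres x hx] at hlim
  -- Taylor to order `j`, whose lower coefficients vanish by induction
  have heq : ∀ᶠ t in 𝓝 0, t ^ j • ((j ! : ℝ)⁻¹ • iteratedDerivSnd j g (x, 0)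
      + t • taylorRemainderSnd j g (x, t)) = t ^ r • δ (x, t) := by
    filter_upwards [Ioo_mem_nhds (neg_neg_of_pos ha) ha] with t ht
    rw [← hfac x hx t ht, eq_sum_add_pow_smul_taylorRemainderSnd hU hgj hx ht,
      Finset.sum_range_succ, Finset.sum_eq_zero fun i hi => by
        have hij := Finset.mem_range.1 hi
        rw [ih i hij (by omega), smul_zero],
      zero_add, smul_add, smul_smul, smul_smul, pow_succ, mul_comm (t ^ j)]
  have := eq_zero_of_pow_smul_eq_pow_smul hj
    (continuousAt_const.add (continuousAt_id.smul hR)) hδ0 heq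
  simpa [Nat.factorial_ne_zero] using this

theorem eq_pow_succ_smul_taylorRemainderSnd_of_eq_pow_smul [CompleteSpace E] {U : Set X}
    (hU : IsOpen U) {a : ℝ} {r : ℕ} {g δ : X × ℝ → E}
    (hg : ContDiffOn ℝ (r + 1) g (U ×ˢ Ioo (-a) a)) (hδ : ContinuousOn δ (U ×ˢ Ioo (-a) a))
    (hfac : ∀ x ∈ U, ∀ h ∈ Ioo (-a) a, g (x, h) = h ^ r • δ (x, h))
    (hres : ∀ x ∈ U, δ (x, 0) = 0) {x : X} {h : ℝ} (hx : x ∈ U) (hh : h ∈ Ioo (-a) a) :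
    g (x, h) = h ^ (r + 1) • taylorRemainderSnd r g (x, h) := by
  have ha : 0 < a := by linarith [hh.1, hh.2]
  rw [eq_sum_add_pow_smul_taylorRemainderSnd hU hg hx hh, Finset.sum_eq_zero fun j hj => by
    rw [iteratedDerivSnd_eq_zero_of_eq_pow_smul hU ha hg hδ hfac hres hx
      (Nat.lt_succ_iff.1 (Finset.mem_range.1 hj)), smul_zero], zero_add]

theorem order_contact_improves_of_vanishing_residual_general
    {n m : ℕ} (U : Set (EuclideanSpace ℝ (Fin n))) (hU : IsOpen U)
    (a : ℝ) (k : ℕ)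
    (f₁ f₂ : EuclideanSpace ℝ (Fin n) × ℝ → EuclideanSpace ℝ (Fin m))
    (hf₁ : ContDiffOn ℝ k f₁ (U ×ˢ Ioo (-a) a))
    (hf₂ : ContDiffOn ℝ k f₂ (U ×ˢ Ioo (-a) a))
    (r : ℕ) (hrk : r < k)
    (δf : EuclideanSpace ℝ (Fin n) × ℝ → EuclideanSpace ℝ (Fin m))
    (hδf : ContinuousOn δf (U ×ˢ Ioo (-a) a))
    (hfac : ∀ x ∈ U, ∀ h ∈ Ioo (-a) a, f₂ (x, h) - f₁ (x, h) = h ^ r • δf (x, h))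
    (hres : ∀ x ∈ U, δf (x, 0) = 0) :
    ∃ δ'f : EuclideanSpace ℝ (Fin n) × ℝ → EuclideanSpace ℝ (Fin m),
      ContinuousOn δ'f (U ×ˢ Ioo (-a) a) ∧
      ∀ x ∈ U, ∀ h ∈ Ioo (-a) a, f₂ (x, h) - f₁ (x, h) = h ^ (r + 1) • δ'f (x, h) := by
  have hg : ContDiffOn ℝ (r + 1) (fun p => f₂ p - f₁ p) (U ×ˢ Ioo (-a) a) :=
    (hf₂.sub hf₁).of_le (by exact_mod_cast hrk)
  exact ⟨taylorRemainderSnd r _, continuousOn_taylorRemainderSnd hU hg, fun x hx h hh =>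
    eq_pow_succ_smul_taylorRemainderSnd_of_eq_pow_smul hU hg hδf hfac hres hx hh⟩

/-- If two `C^k` maps on `U × (−a,a)` have order-`h^r` contact with `r < k` and the continuous
factor vanishes at `h = 0`, then they have order-`h^{r+1}` contact. -/
theorem order_contact_improves_of_vanishing_residual
    {n m : ℕ} (U : Set (EuclideanSpace ℝ (Fin n))) (hU : IsOpen U)
    (a : ℝ) (ha : 0 < a) (k : ℕ) (hk : 1 ≤ k)
    (f₁ f₂ : EuclideanSpace ℝ (Fin n) × ℝ → EuclideanSpace ℝ (Fin m))
    (hf₁ : ContDiffOn ℝ k f₁ (U ×ˢ Ioo (-a) a))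
    (hf₂ : ContDiffOn ℝ k f₂ (U ×ˢ Ioo (-a) a))
    (r : ℕ) (hr1 : 1 ≤ r) (hrk : r < k)
    (δf : EuclideanSpace ℝ (Fin n) × ℝ → EuclideanSpace ℝ (Fin m))
    (hδf : ContinuousOn δf (U ×ˢ Ioo (-a) a))
    (hfac : ∀ x ∈ U, ∀ h ∈ Ioo (-a) a, f₂ (x, h) - f₁ (x, h) = h ^ r • δf (x, h))
    (hres : ∀ x ∈ U, δf (x, 0) = 0) :
    ∃ δ'f : EuclideanSpace ℝ (Fin n) × ℝ → EuclideanSpace ℝ (Fin m),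
      ContinuousOn δ'f (U ×ˢ Ioo (-a) a) ∧
      ∀ x ∈ U, ∀ h ∈ Ioo (-a) a, f₂ (x, h) - f₁ (x, h) = h ^ (r + 1) • δ'f (x, h) :=
  order_contact_improves_of_vanishing_residual_general U hU a k f₁ f₂ hf₁ hf₂ r hrk δf hδf hfac hres

end
end

section
/- There is no open subset W ⊆ ℝ × ℝ × ℝ with the following two properties: (1) (0, q, q) ∈ W for every q ∈ ℝ; and (2) every (h, q⁺, q⁻) ∈ W with h ≠ 0 satisfies |q⁺ − q⁻| < √|h|. -/
/-!
Along the parabola `δ ↦ (δ², q + δ/2, q − δ/2)` the inequality `|q⁺ − q⁻| < √|h|` fails by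
equality, yet the parabola converges to `(0, q, q)` as `δ → 0`; so any open `W` containing
`(0, q, q)` contains one of its points with `δ ≠ 0`.
-/

open Filter Topology

lemma tendsto_parabola_nhds_diagonal (q : ℝ) :
    Tendsto (fun δ : ℝ => (δ ^ 2, q + δ / 2, q - δ / 2)) (𝓝 0) (𝓝 (0, q, q)) := by
  have hcont : Continuous (fun δ : ℝ => (δ ^ 2, q + δ / 2, q - δ / 2)) := by fun_prop
  simpa using hcont.tendsto 0

lemma abs_add_half_sub_sub_half (q δ : ℝ) : |(q + δ / 2) - (q - δ / 2)| = Real.sqrt |δ ^ 2| := by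
  rw [abs_pow, Real.sqrt_sq (abs_nonneg δ)]
  ring_nf

/-- There is no open set `W ⊆ ℝ × ℝ × ℝ` containing `(0,q,q)` for every `q` all of whose points
`(h, q⁺, q⁻)` with `h ≠ 0` satisfy `|q⁺ − q⁻| < √|h|`. -/
theorem no_open_wedge_neighborhood :
    ¬ ∃ W : Set (ℝ × ℝ × ℝ), IsOpen W ∧ (∀ q : ℝ, ((0 : ℝ), q, q) ∈ W) ∧
      ∀ h qp qm : ℝ, (h, qp, qm) ∈ W → h ≠ 0 → |qp - qm| < Real.sqrt |h| := by
  rintro ⟨W, hW, hdiag, hwedge⟩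
  have hnear : ∀ᶠ δ in 𝓝[≠] (0 : ℝ), (δ ^ 2, 0 + δ / 2, 0 - δ / 2) ∈ W ∧ δ ≠ 0 :=
    ((tendsto_parabola_nhds_diagonal 0).eventually (hW.mem_nhds (hdiag 0))).filter_mono
      nhdsWithin_le_nhds |>.and self_mem_nhdsWithin
  obtain ⟨δ, hδW, hδ⟩ := hnear.exists
  exact (hwedge _ _ _ hδW (pow_ne_zero 2 hδ)).ne (abs_add_half_sub_sub_half 0 δ)
end

section
/- Let U ⊆ ℝ × ℝ × ℝ^d be open, let r ≥ 0 be a natural number, and let ψ₁, ψ₂ : U → ℝ^n be continuous functions such that ψ₂(h,t,v) − ψ₁(h,t,v) = t^{r+1} · δψ(h,t,v) for all (h,t,v) ∈ U, where δψ : U → ℝ^n is continuous. Let a > 0 and let α : (−a,a) → ℝ be continuously differentiable with α(0) = 0. Define U″ = {(h,v) ∈ ℝ × ℝ^d : |h| < a and (h, α(h), v) ∈ U}, and define ∂^j : U″ → ℝ^n by ∂^j(h,v) = ψ_j(h, α(h), v) for j = 1, 2. Then there exists a continuous function δ∂ : U″ → ℝ^n with ∂²(h,v) − ∂¹(h,v)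 = h^{r+1} · δ∂(h,v) for all (h,v) ∈ U″. -/
/-!
Write `α h = h * q h` with `q = dslope α 0`, which is continuous because `α` is differentiable
at `0`. Then `ψ₂ - ψ₁` at `(h, α h, v)` equals `(h * q h) ^ (r + 1) • δψ (h, α h, v)`, so
`δ (h, v) = q h ^ (r + 1) • δψ (h, α h, v)` works.
-/

open Set Topology

theorem DifferentiableOn.continuousOn_dslope {𝕜 E : Type*} [NontriviallyNormedField 𝕜]
    [NormedAddCommGroup E] [NormedSpace 𝕜 E] {f : 𝕜 → E} {s : Set 𝕜} {a : 𝕜}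
    (hf : DifferentiableOn 𝕜 f s) (hs : s ∈ 𝓝 a) : ContinuousOn (dslope f a) s :=
  (_root_.continuousOn_dslope hs).2 ⟨hf.continuousOn, hf.differentiableAt hs⟩

theorem eq_smul_dslope_zero {𝕜 E : Type*} [NontriviallyNormedField 𝕜] [NormedAddCommGroup E]
    [NormedSpace 𝕜 E] {f : 𝕜 → E} (hf : f 0 = 0) (x : 𝕜) : f x = x • dslope f 0 x := by
  simpa [hf] using (sub_smul_dslope f 0 x).symm

theorem boundary_maps_contact_order_general
    {d n : ℕ} (U : Set (ℝ × ℝ × (Fin d → ℝ)))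
    (r : ℕ)
    (ψ₁ ψ₂ : ℝ × ℝ × (Fin d → ℝ) → Fin n → ℝ)
    (δψ : ℝ × ℝ × (Fin d → ℝ) → Fin n → ℝ) (hδψ : ContinuousOn δψ U)
    (hfac : ∀ z ∈ U, ψ₂ z - ψ₁ z = z.2.1 ^ (r + 1) • δψ z)
    (a : ℝ) (ha : 0 < a) (α : ℝ → ℝ)
    (hα : ContDiffOn ℝ 1 α (Ioo (-a) a)) (hα0 : α 0 = 0)
    (U'' : Set (ℝ × (Fin d → ℝ)))
    (hU'' : U'' = {p : ℝ × (Fin d → ℝ) | |p.1| < a ∧ (p.1, α p.1, p.2) ∈ U}) :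
    ∃ δ : ℝ × (Fin d → ℝ) → Fin n → ℝ,
      ContinuousOn δ U'' ∧
      ∀ p ∈ U'',
        ψ₂ (p.1, α p.1, p.2) - ψ₁ (p.1, α p.1, p.2) = p.1 ^ (r + 1) • δ p := by
  set Φ : ℝ × (Fin d → ℝ) → ℝ × ℝ × (Fin d → ℝ) := fun p => (p.1, α p.1, p.2)
  have hfst : MapsTo Prod.fst U'' (Ioo (-a) a) := by
    intro p hp
    rw [hU''] at hp
    exact abs_lt.mp hp.1
  have hΦU : MapsTo Φ U'' U := by
    intro p hp
    rw [hU''] at hp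
    exact hp.2
  have hΦ : ContinuousOn Φ U'' :=
    continuousOn_fst.prodMk ((hα.continuousOn.comp continuousOn_fst hfst).prodMk continuousOn_snd)
  have hq : ContinuousOn (dslope α 0) (Ioo (-a) a) :=
    (hα.differentiableOn one_ne_zero).continuousOn_dslope (Ioo_mem_nhds (neg_neg_of_pos ha) ha)
  refine ⟨fun p => dslope α 0 p.1 ^ (r + 1) • δψ (Φ p),
    ((hq.comp continuousOn_fst hfst).pow _).smul (hδψ.comp hΦ hΦU), fun p hp => ?_⟩
  rw [hfac _ (hΦU hp)]
  change α p.1 ^ (r + 1) • δψ (Φ p) = _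
  rw [eq_smul_dslope_zero hα0 p.1, smul_eq_mul, mul_pow, smul_smul]

/-- If two discretizations `ψ₁, ψ₂` have order-`t^{r+1}` contact in the second variable, then
the boundary maps `∂^j(h,v) = ψ_j(h, α(h), v)` obtained from a `C¹` reparametrization `α` with
`α(0) = 0` have order-`h^{r+1}` contact in the first variable. -/
theorem boundary_maps_contact_order
    {d n : ℕ} (U : Set (ℝ × ℝ × (Fin d → ℝ))) (hU : IsOpen U)
    (r : ℕ)
    (ψ₁ ψ₂ : ℝ × ℝ × (Fin d → ℝ) → Fin n → ℝ)
    (hψ₁ : ContinuousOn ψ₁ U) (hψ₂ : ContinuousOn ψ₂ U)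
    (δψ : ℝ × ℝ × (Fin d → ℝ) → Fin n → ℝ) (hδψ : ContinuousOn δψ U)
    (hfac : ∀ z ∈ U, ψ₂ z - ψ₁ z = z.2.1 ^ (r + 1) • δψ z)
    (a : ℝ) (ha : 0 < a) (α : ℝ → ℝ)
    (hα : ContDiffOn ℝ 1 α (Ioo (-a) a)) (hα0 : α 0 = 0)
    (U'' : Set (ℝ × (Fin d → ℝ)))
    (hU'' : U'' = {p : ℝ × (Fin d → ℝ) | |p.1| < a ∧ (p.1, α p.1, p.2) ∈ U}) :
    ∃ δ : ℝ × (Fin d → ℝ) → Fin n → ℝ,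
      ContinuousOn δ U'' ∧
      ∀ p ∈ U'',
        ψ₂ (p.1, α p.1, p.2) - ψ₁ (p.1, α p.1, p.2) = p.1 ^ (r + 1) • δ p :=
  boundary_maps_contact_order_general U r ψ₁ ψ₂ δψ hδψ hfac a ha α hα hα0 U'' hU''
end

section
/- Let U ⊆ ℝ^n be open, a > 0, and let f₁, f₂ : U × (−a,a) → ℝ^m be smooth (C^∞). Let r ≥ 1 be a natural number, and suppose there is a continuous function δf : U × (−a,a) → ℝ^m with f₂(x,h) − f₁(x,h) = h^r · δf(x,h) for all (x,h). Then there exists a continuous map Δ : U × (−a,a) → Hom(ℝ^n × ℝ, ℝ^m) such that Df₂(x,h) − Df₁(x,h) = h^{r−1} · Δ(x,h) for all (x,h) ∈ U × (−a,a), where Df_j(x,h) denotes the total (Fréchet) derivative of f_j at (x,h). -/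
/-!
Iterating Hadamard's lemma `g (x, h) = g (x, 0) + h • ∫₀¹ ∂ₕg (x, t h) dt` writes `f₂ - f₁` as
`h ^ r • g` with `g` smooth: each quotient is smooth, being a parametric integral of a smooth
kernel over a compact interval, and it agrees with `h ^ (r - 1) • δf` off `h = 0`, hence
everywhere by continuity. Differentiating `h ^ r • g` then exhibits the factor `h ^ (r - 1)`,
with cofactor `r • dh ⊗ g + h • Dg`.
-/

open Set Filter Topology intervalIntegral
open scoped ContDiff

universe u

noncomputable section

theorem ContinuousOn.exists_eventually_forall_mem_norm_le {X Y F : Type*} [TopologicalSpace X]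
    [TopologicalSpace Y] [SeminormedAddGroup F] {K : X × Y → F} {W : Set (X × Y)}
    (hK : ContinuousOn K W) (hW : IsOpen W) {s : Set Y} (hs : IsCompact s) {x₀ : X}
    (hx₀ : ∀ t ∈ s, (x₀, t) ∈ W) :
    ∃ M, ∀ᶠ x in 𝓝 x₀, ∀ t ∈ s, (x, t) ∈ W ∧ ‖K (x, t)‖ ≤ M := by
  obtain ⟨M, hM⟩ := hs.exists_bound_of_continuousOn
    (hK.comp (Continuous.prodMk_right x₀).continuousOn hx₀)
  refine ⟨M + 1, hs.eventually_forall_of_forall_eventually fun t ht => ?_⟩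
  have hW_nhds : W ∈ 𝓝 (x₀, t) := hW.mem_nhds (hx₀ t ht)
  have hK_near := (hK.continuousAt hW_nhds).norm.eventually (gt_mem_nhds (lt_add_one _))
  filter_upwards [hW_nhds, hK_near] with z hzW hKz
  exact ⟨hzW, hKz.le.trans (by gcongr; exact hM t ht)⟩

theorem continuousAt_parametric_intervalIntegral_of_continuousOn {X F : Type*}
    [TopologicalSpace X] [FirstCountableTopology X] [NormedAddCommGroup F] [NormedSpace ℝ F]
    {K : X × ℝ → F} {W : Set (X × ℝ)} {a b : ℝ} (hW : IsOpen W) (hK : ContinuousOn K W)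
    {x₀ : X} (hx₀ : ∀ t ∈ uIcc a b, (x₀, t) ∈ W) :
    ContinuousAt (fun x => ∫ t in a..b, K (x, t)) x₀ := by
  obtain ⟨M, hM⟩ := hK.exists_eventually_forall_mem_norm_le hW isCompact_uIcc hx₀
  refine continuousAt_of_dominated_interval (bound := fun _ => M) ?_ ?_ intervalIntegrable_const
    (Eventually.of_forall fun t ht => ?_)
  · filter_upwards [hM] with x hx
    exact ((hK.comp (Continuous.prodMk_right x).continuousOn fun t ht => (hx t ht).1).mono
      uIoc_subset_uIcc).aestronglyMeasurable measurableSet_uIoc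
  · filter_upwards [hM] with x hx
    exact Eventually.of_forall fun t ht => (hx t (uIoc_subset_uIcc ht)).2
  · exact (hK.continuousAt (hW.mem_nhds (hx₀ t (uIoc_subset_uIcc ht)))).comp (x := x₀)
      (Continuous.prodMk_left t).continuousAt

section ParametricIntegral

-- `P` and `F` share a universe so that the induction below can pass to the kernel's partial
-- derivative, which takes values in `P →L[ℝ] F`.
variable {P F : Type u} [NormedAddCommGroup P] [NormedSpace ℝ P]
  [NormedAddCommGroup F] [NormedSpace ℝ F] {a b : ℝ}

theorem hasFDerivAt_parametric_intervalIntegral_of_contDiffOn {K : P × ℝ → F}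
    {W : Set (P × ℝ)} (hW : IsOpen W) (hK : ContDiffOn ℝ 1 K W)
    {p₀ : P} (hp₀ : ∀ t ∈ uIcc a b, (p₀, t) ∈ W) :
    HasFDerivAt (fun p => ∫ t in a..b, K (p, t))
      (∫ t in a..b, fderiv ℝ K (p₀, t) ∘L .inl ℝ P ℝ) p₀ := by
  have hK' : ContinuousOn (fun z => fderiv ℝ K z ∘L .inl ℝ P ℝ) W :=
    (hK.continuousOn_fderiv_of_isOpen hW le_rfl).clm_comp continuousOn_const
  obtain ⟨M, hM⟩ := hK'.exists_eventually_forall_mem_norm_le hW isCompact_uIcc hp₀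
  have hK_slice {x : P} (hx : ∀ t ∈ uIcc a b, (x, t) ∈ W) :
      ContinuousOn (fun t => K (x, t)) (uIcc a b) :=
    hK.continuousOn.comp (Continuous.prodMk_right x).continuousOn hx
  refine hasFDerivAt_integral_of_dominated_of_fderiv_le (bound := fun _ => M)
    hM ?_ ((hK_slice fun t ht => (hM.self_of_nhds t ht).1).intervalIntegrable) ?_
    (Eventually.of_forall fun t ht x hx => (hx t (uIoc_subset_uIcc ht)).2)
    intervalIntegrable_const (Eventually.of_forall fun t ht x hx => ?_)
  · filter_upwards [hM] with x hx
    exact ((hK_slice fun t ht => (hx t ht).1).mono uIoc_subset_uIcc).aestronglyMeasurable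
      measurableSet_uIoc
  · exact ((hK'.comp (Continuous.prodMk_right p₀).continuousOn
      fun t ht => (hM.self_of_nhds t ht).1).mono uIoc_subset_uIcc).aestronglyMeasurable
      measurableSet_uIoc
  · have hxt : (x, t) ∈ W := (hx t (uIoc_subset_uIcc ht)).1
    exact ((hK.differentiableOn one_ne_zero).differentiableAt (hW.mem_nhds hxt)).hasFDerivAt.comp
      x (hasFDerivAt_prodMk_left x t)

theorem contDiffOn_parametric_intervalIntegral_of_contDiffOn {n : ℕ} {K : P × ℝ → F}
    {W : Set (P × ℝ)} (hW : IsOpen W) (hK : ContDiffOn ℝ n K W) {Ω : Set P} (hΩ : IsOpen Ω)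
    (hΩW : ∀ p ∈ Ω, ∀ t ∈ uIcc a b, (p, t) ∈ W) :
    ContDiffOn ℝ n (fun p => ∫ t in a..b, K (p, t)) Ω := by
  induction n generalizing F K with
  | zero =>
    exact contDiffOn_zero.2 fun p hp =>
      (continuousAt_parametric_intervalIntegral_of_continuousOn hW hK.continuousOn
        (hΩW p hp)).continuousWithinAt
  | succ n ih =>
    have hK1 : ContDiffOn ℝ 1 K W := hK.of_le (by exact_mod_cast n.succ_pos)
    have hderiv (p : P) (hp : p ∈ Ω) :
        HasFDerivAt (fun p => ∫ t in a..b, K (p, t))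
          (∫ t in a..b, fderiv ℝ K (p, t) ∘L .inl ℝ P ℝ) p :=
      hasFDerivAt_parametric_intervalIntegral_of_contDiffOn hW hK1 (hΩW p hp)
    have hK' : ContDiffOn ℝ n (fun z => fderiv ℝ K z ∘L .inl ℝ P ℝ) W :=
      (hK.fderiv_of_isOpen hW (by push_cast; rfl)).clm_comp contDiffOn_const
    rw [Nat.cast_succ, contDiffOn_succ_iff_fderiv_of_isOpen hΩ]
    exact ⟨fun p hp => (hderiv p hp).differentiableAt.differentiableWithinAt, by simp,
      (ih hK').congr fun p hp => (hderiv p hp).fderiv⟩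

end ParametricIntegral

theorem eqOn_of_snd_smul_eq {X F : Type*} [TopologicalSpace X] [NormedAddCommGroup F]
    [NormedSpace ℝ F] {Ω : Set (X × ℝ)} (hΩ : IsOpen Ω) {f₁ f₂ : X × ℝ → F}
    (hf₁ : ContinuousOn f₁ Ω) (hf₂ : ContinuousOn f₂ Ω)
    (h : ∀ p ∈ Ω, p.2 • f₁ p = p.2 • f₂ p) : EqOn f₁ f₂ Ω := by
  have hdense : Dense {p : X × ℝ | p.2 ≠ 0} := (dense_compl_singleton 0).preimage isOpenMap_snd
  refine EqOn.of_subset_closure (fun p hp => ?_) hf₁ hf₂ inter_subset_left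
    (hdense.open_subset_closure_inter hΩ)
  exact smul_right_injective F hp.2 (h p hp.1)

section Hadamard

variable {E F : Type u} [NormedAddCommGroup E] [NormedSpace ℝ E]
  [NormedAddCommGroup F] [NormedSpace ℝ F] {Ω : Set (E × ℝ)} {g : E × ℝ → F}

def hadamardQuotient (g : E × ℝ → F) (p : E × ℝ) : F :=
  ∫ t in (0 : ℝ)..1, fderiv ℝ g (p.1, t * p.2) (0, 1)

theorem eq_add_snd_smul_hadamardQuotient [CompleteSpace F] (hΩ : IsOpen Ω)
    (hΩ_star : ∀ p ∈ Ω, ∀ t ∈ Icc (0 : ℝ) 1, (p.1, t * p.2) ∈ Ω) (hg : ContDiffOn ℝ 1 g Ω)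
    {p : E × ℝ} (hp : p ∈ Ω) :
    g p = g (p.1, 0) + p.2 • hadamardQuotient g p := by
  rw [← uIcc_of_le zero_le_one] at hΩ_star
  have hderiv : ∀ t ∈ uIcc (0 : ℝ) 1, HasDerivAt (fun s : ℝ => g (p.1, s * p.2))
      (fderiv ℝ g (p.1, t * p.2) (0, p.2)) t := fun t ht =>
    ((hg.differentiableOn one_ne_zero).differentiableAt
      (hΩ.mem_nhds (hΩ_star p hp t ht))).hasFDerivAt.comp_hasDerivAt t
      ((hasDerivAt_const t p.1).prodMk (hasDerivAt_mul_const p.2))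
  have hcont : ContinuousOn (fun t : ℝ => fderiv ℝ g (p.1, t * p.2) (0, p.2)) (uIcc 0 1) :=
    ((hg.continuousOn_fderiv_of_isOpen hΩ le_rfl).comp (by fun_prop)
      (hΩ_star p hp)).clm_apply continuousOn_const
  have hsmul (t : ℝ) :
      fderiv ℝ g (p.1, t * p.2) (0, p.2) = p.2 • fderiv ℝ g (p.1, t * p.2) (0, 1) := by
    rw [← map_smul, Prod.smul_mk, smul_zero, smul_eq_mul, mul_one]
  have hFTC := integral_eq_sub_of_hasDerivAt hderiv hcont.intervalIntegrable
  simp only [one_mul, zero_mul, hsmul, intervalIntegral.integral_smul] at hFTC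
  rw [hadamardQuotient, hFTC, add_sub_cancel]

theorem contDiffOn_hadamardQuotient [CompleteSpace F] {n : ℕ} (hΩ : IsOpen Ω)
    (hΩ_star : ∀ p ∈ Ω, ∀ t ∈ Icc (0 : ℝ) 1, (p.1, t * p.2) ∈ Ω)
    (hg : ContDiffOn ℝ (n + 1) g Ω) :
    ContDiffOn ℝ n (hadamardQuotient g) Ω := by
  let ψ : (E × ℝ) × ℝ → E × ℝ := fun z => (z.1.1, z.2 * z.1.2)
  have hψ : ContDiff ℝ n ψ := by fun_prop
  have hK : ContDiffOn ℝ n (fun z => fderiv ℝ g (ψ z) (0, 1)) (ψ ⁻¹' Ω) :=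
    ((hg.fderiv_of_isOpen hΩ le_rfl).comp hψ.contDiffOn (mapsTo_preimage ψ Ω)).clm_apply
      contDiffOn_const
  exact contDiffOn_parametric_intervalIntegral_of_contDiffOn (hΩ.preimage hψ.continuous) hK hΩ
    (by rw [uIcc_of_le zero_le_one]; exact hΩ_star)

theorem exists_contDiffOn_eq_snd_pow_smul [CompleteSpace F] (hΩ : IsOpen Ω)
    (hΩ_star : ∀ p ∈ Ω, ∀ t ∈ Icc (0 : ℝ) 1, (p.1, t * p.2) ∈ Ω) (r : ℕ) {δ : E × ℝ → F}
    (hg : ContDiffOn ℝ ∞ g Ω) (hδ : ContinuousOn δ Ω) (hgδ : ∀ p ∈ Ω, g p = p.2 ^ r • δ p) :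
    ∃ g' : E × ℝ → F, ContDiffOn ℝ ∞ g' Ω ∧ ∀ p ∈ Ω, g p = p.2 ^ r • g' p := by
  induction r generalizing g with
  | zero => exact ⟨g, hg, fun p _ => by simp⟩
  | succ r ih =>
    have hq : ContDiffOn ℝ ∞ (hadamardQuotient g) Ω := contDiffOn_infty.2 fun n =>
      contDiffOn_hadamardQuotient hΩ hΩ_star (hg.of_le (by exact_mod_cast le_top))
    have hgq (p : E × ℝ) (hp : p ∈ Ω) : g p = p.2 • hadamardQuotient g p := by
      have hp₀ : (p.1, 0) ∈ Ω := by simpa using hΩ_star p hp 0 (left_mem_Icc.2 zero_le_one)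
      rw [eq_add_snd_smul_hadamardQuotient hΩ hΩ_star (hg.of_le (by exact_mod_cast le_top)) hp,
        hgδ _ hp₀]
      simp
    have hqδ : EqOn (hadamardQuotient g) (fun p => p.2 ^ r • δ p) Ω :=
      eqOn_of_snd_smul_eq hΩ hq.continuousOn ((continuous_snd.pow r).continuousOn.smul hδ)
        fun p hp => by rw [← hgq p hp, hgδ p hp, pow_succ', mul_smul]
    obtain ⟨g', hg', hqg'⟩ := ih hq hqδ
    exact ⟨g', hg', fun p hp => by rw [hgq p hp, hqg' p hp, smul_smul, ← pow_succ']⟩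

theorem HasFDerivAt.snd_pow_succ_smul {g' : E × ℝ →L[ℝ] F} {p : E × ℝ}
    (hg : HasFDerivAt g g' p) (r : ℕ) :
    HasFDerivAt (fun q => q.2 ^ (r + 1) • g q)
      (p.2 ^ r • (((r : ℝ) + 1) • (ContinuousLinearMap.snd ℝ E ℝ).smulRight (g p) + p.2 • g'))
      p := by
  have hpow : HasFDerivAt (fun q : E × ℝ => q.2 ^ (r + 1))
      ((((r + 1 : ℕ) : ℝ) * p.2 ^ r) • ContinuousLinearMap.snd ℝ E ℝ) p :=
    (hasDerivAt_pow (r + 1) p.2).comp_hasFDerivAt p hasFDerivAt_snd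
  refine (hpow.smul hg).congr_fderiv (ContinuousLinearMap.ext fun v => ?_)
  simp only [add_apply, smul_apply, ContinuousLinearMap.smulRight_apply,
    ContinuousLinearMap.coe_snd', smul_add, smul_smul]
  push_cast
  match_scalars <;> ring

theorem exists_continuousOn_fderiv_eq_snd_pow_smul (hΩ : IsOpen Ω) {f : E × ℝ → F}
    (hg : ContDiffOn ℝ 1 g Ω) (r : ℕ) (hfg : ∀ p ∈ Ω, f p = p.2 ^ (r + 1) • g p) :
    ∃ Δ : E × ℝ → E × ℝ →L[ℝ] F, ContinuousOn Δ Ω ∧ ∀ p ∈ Ω, fderiv ℝ f p = p.2 ^ r • Δ p := by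
  refine ⟨fun p => ((r : ℝ) + 1) • (ContinuousLinearMap.snd ℝ E ℝ).smulRight (g p)
    + p.2 • fderiv ℝ g p, ?_, fun p hp => ?_⟩
  · have hsmulRight : Continuous fun v : F => (ContinuousLinearMap.snd ℝ E ℝ).smulRight v := by
      fun_prop
    have hg_cont := hsmulRight.comp_continuousOn hg.continuousOn
    have hg'_cont := hg.continuousOn_fderiv_of_isOpen hΩ le_rfl
    fun_prop
  · have hg_diff : DifferentiableAt ℝ g p :=
      (hg.differentiableOn one_ne_zero).differentiableAt (hΩ.mem_nhds hp)
    exact ((hg_diff.hasFDerivAt.snd_pow_succ_smul r).congr_of_eventuallyEq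
      (eventually_of_mem (hΩ.mem_nhds hp) hfg)).fderiv

end Hadamard

theorem tangent_maps_contact_order_drops_one_general
    {n m : ℕ} (U : Set (EuclideanSpace ℝ (Fin n))) (hU : IsOpen U)
    (a : ℝ)
    (f₁ f₂ : EuclideanSpace ℝ (Fin n) × ℝ → EuclideanSpace ℝ (Fin m))
    (hf₁ : ContDiffOn ℝ (⊤ : ℕ∞) f₁ (U ×ˢ Ioo (-a) a))
    (hf₂ : ContDiffOn ℝ (⊤ : ℕ∞) f₂ (U ×ˢ Ioo (-a) a))
    (r : ℕ) (hr : 1 ≤ r)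
    (δf : EuclideanSpace ℝ (Fin n) × ℝ → EuclideanSpace ℝ (Fin m))
    (hδf : ContinuousOn δf (U ×ˢ Ioo (-a) a))
    (hfac : ∀ x ∈ U, ∀ h ∈ Ioo (-a) a, f₂ (x, h) - f₁ (x, h) = h ^ r • δf (x, h)) :
    ∃ Δ : EuclideanSpace ℝ (Fin n) × ℝ →
        (EuclideanSpace ℝ (Fin n) × ℝ →L[ℝ] EuclideanSpace ℝ (Fin m)),
      ContinuousOn Δ (U ×ˢ Ioo (-a) a) ∧
      ∀ p ∈ U ×ˢ Ioo (-a) a,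
        fderiv ℝ f₂ p - fderiv ℝ f₁ p = p.2 ^ (r - 1) • Δ p := by
  set Ω := U ×ˢ Ioo (-a) a
  have hΩ : IsOpen Ω := hU.prod isOpen_Ioo
  have hΩ_star : ∀ p ∈ Ω, ∀ t ∈ Icc (0 : ℝ) 1, (p.1, t * p.2) ∈ Ω := fun p hp t ht =>
    ⟨hp.1, by constructor <;> nlinarith [ht.1, ht.2, hp.2.1, hp.2.2]⟩
  obtain ⟨k, rfl⟩ : ∃ k, r = k + 1 := ⟨r - 1, by omega⟩
  obtain ⟨g, hg, hfg⟩ := exists_contDiffOn_eq_snd_pow_smul hΩ hΩ_star (k + 1) (hf₂.sub hf₁) hδf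
    fun p hp => hfac p.1 hp.1 p.2 hp.2
  obtain ⟨Δ, hΔ, hfΔ⟩ := exists_continuousOn_fderiv_eq_snd_pow_smul hΩ (hg.of_le (by simp)) k hfg
  refine ⟨Δ, hΔ, fun p hp => ?_⟩
  have hdiff {f : EuclideanSpace ℝ (Fin n) × ℝ → EuclideanSpace ℝ (Fin m)}
      (hf : ContDiffOn ℝ (⊤ : ℕ∞) f Ω) : DifferentiableAt ℝ f p :=
    (hf.differentiableOn (by simp)).differentiableAt (hΩ.mem_nhds hp)
  rw [Nat.add_sub_cancel, ← fderiv_sub (hdiff hf₂) (hdiff hf₁)]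
  exact hfΔ p hp

/-- If two smooth maps on `U × (−a,a)` have order-`h^r` contact, then their total Fréchet
derivatives have order-`h^{r−1}` contact. -/
theorem tangent_maps_contact_order_drops_one
    {n m : ℕ} (U : Set (EuclideanSpace ℝ (Fin n))) (hU : IsOpen U)
    (a : ℝ) (ha : 0 < a)
    (f₁ f₂ : EuclideanSpace ℝ (Fin n) × ℝ → EuclideanSpace ℝ (Fin m))
    (hf₁ : ContDiffOn ℝ (⊤ : ℕ∞) f₁ (U ×ˢ Ioo (-a) a))
    (hf₂ : ContDiffOn ℝ (⊤ : ℕ∞) f₂ (U ×ˢ Ioo (-a) a))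
    (r : ℕ) (hr : 1 ≤ r)
    (δf : EuclideanSpace ℝ (Fin n) × ℝ → EuclideanSpace ℝ (Fin m))
    (hδf : ContinuousOn δf (U ×ˢ Ioo (-a) a))
    (hfac : ∀ x ∈ U, ∀ h ∈ Ioo (-a) a, f₂ (x, h) - f₁ (x, h) = h ^ r • δf (x, h)) :
    ∃ Δ : EuclideanSpace ℝ (Fin n) × ℝ →
        (EuclideanSpace ℝ (Fin n) × ℝ →L[ℝ] EuclideanSpace ℝ (Fin m)),
      ContinuousOn Δ (U ×ˢ Ioo (-a) a) ∧
      ∀ p ∈ U ×ˢ Ioo (-a) a,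
        fderiv ℝ f₂ p - fderiv ℝ f₁ p = p.2 ^ (r - 1) • Δ p :=
  tangent_maps_contact_order_drops_one_general U hU a f₁ f₂ hf₁ hf₂ r hr δf hδf hfac
end
end

section
/- Let M be a topological space that is Hausdorff and paracompact, let ĥ : M → ℝ be continuous, let E be a topological real vector bundle over M, let r ≥ 0 be a natural number, and let f₁, f₂ be continuous sections of E. Then the following are equivalent: (1) for every m₀ ∈ M with ĥ(m₀) = 0 there exist an open neighborhood U of m₀ in M and a continuous local section δf_U of E over U with f₂(m) − f₁(m) = ĥ(m)^r · δf_U(m) for all m ∈ U; (2) there exists a global continuous section δf of E over M with f₂(m) − f₁(m) = ĥ(m)^r · δf(m) for all m ∈ M. -/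
/-!
Over a normal paracompact base, fiberwise convex conditions that continuous sections can meet
locally can be met by a continuous section globally: glue the local sections with a subordinate
partition of unity. The condition `f₂ m - f₁ m = g m ^ r • δ` on `δ ∈ E m` is affine, hence
convex, and it can be met locally everywhere: near a zero of `g` by hypothesis, and on the open
set `{g ≠ 0}` by `(g ^ r)⁻¹ • (f₂ - f₁)`.
-/

open Set Bundle Topology FiberBundle

theorem convex_setOf_eq_smul {𝕜 V : Type*} [CommSemiring 𝕜] [PartialOrder 𝕜]
    [AddCommMonoid V] [Module 𝕜 V] (d : V) (c : 𝕜) : Convex 𝕜 {v : V | d = c • v} := by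
  intro x hx y hy a b _ _ hab
  rw [mem_ofPred_eq, smul_add, smul_comm c a, smul_comm c b, ← hx, ← hy, ← add_smul, hab,
    one_smul]

section ContinuousSection

variable {B F : Type*} [TopologicalSpace B]
  [NormedAddCommGroup F] [NormedSpace ℝ F]
  {E : B → Type*} [∀ x, AddCommGroup (E x)] [∀ x, Module ℝ (E x)]
  [TopologicalSpace (TotalSpace F E)] [∀ x, TopologicalSpace (E x)]
  [FiberBundle F E] [VectorBundle ℝ F E]

variable (F E) in
theorem FiberBundle.eventually_isLinearMap_trivializationAt (x₀ : B) :
    ∀ᶠ x in 𝓝 x₀, IsLinearMap ℝ fun v : E x ↦ (trivializationAt F E x₀ ⟨x, v⟩).2 :=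
  Filter.eventually_of_mem
    ((trivializationAt F E x₀).open_baseSet.mem_nhds (mem_baseSet_trivializationAt F E x₀))
    fun _ hx ↦ (trivializationAt F E x₀).linear ℝ hx

theorem ContinuousWithinAt.sub_section {s t : ∀ x, E x} {u : Set B} {x₀ : B}
    (hs : ContinuousWithinAt (fun x ↦ TotalSpace.mk' F x (s x)) u x₀)
    (ht : ContinuousWithinAt (fun x ↦ TotalSpace.mk' F x (t x)) u x₀) :
    ContinuousWithinAt (fun x ↦ TotalSpace.mk' F x (s x - t x)) u x₀ := by
  rw [continuousWithinAt_section] at hs ht ⊢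
  have hlin := eventually_isLinearMap_trivializationAt F E x₀
  exact (hs.sub ht).congr_of_eventuallyEq
    ((eventually_nhdsWithin_of_eventually_nhds hlin).mono fun x hx ↦ hx.mk'.map_sub _ _)
    (hlin.self_of_nhds.mk'.map_sub _ _)

theorem ContinuousWithinAt.smul_section {s : ∀ x, E x} {f : B → ℝ} {u : Set B} {x₀ : B}
    (hf : ContinuousWithinAt f u x₀)
    (hs : ContinuousWithinAt (fun x ↦ TotalSpace.mk' F x (s x)) u x₀) :
    ContinuousWithinAt (fun x ↦ TotalSpace.mk' F x (f x • s x)) u x₀ := by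
  rw [continuousWithinAt_section] at hs ⊢
  have hlin := eventually_isLinearMap_trivializationAt F E x₀
  exact (hf.smul hs).congr_of_eventuallyEq
    ((eventually_nhdsWithin_of_eventually_nhds hlin).mono fun x hx ↦ hx.mk'.map_smul _ _)
    (hlin.self_of_nhds.mk'.map_smul _ _)

theorem ContinuousAt.sum_section {ι : Type*} {I : Finset ι} {t : ι → ∀ x, E x} {x₀ : B}
    (ht : ∀ i ∈ I, ContinuousAt (fun x ↦ TotalSpace.mk' F x (t i x)) x₀) :
    ContinuousAt (fun x ↦ TotalSpace.mk' F x (∑ i ∈ I, t i x)) x₀ := by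
  simp_rw [continuousAt_section] at ht ⊢
  have hlin := eventually_isLinearMap_trivializationAt F E x₀
  have hsum : ContinuousAt (fun x ↦ ∑ i ∈ I, (trivializationAt F E x₀ ⟨x, t i x⟩).2) x₀ :=
    tendsto_finsetSum I ht
  exact hsum.congr (hlin.mono fun x hx ↦ (map_sum hx.mk' _ _).symm)

theorem Continuous.sub_section {s t : ∀ x, E x} (hs : Continuous fun x ↦ TotalSpace.mk' F x (s x))
    (ht : Continuous fun x ↦ TotalSpace.mk' F x (t x)) :
    Continuous fun x ↦ TotalSpace.mk' F x (s x - t x) :=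
  continuous_iff_continuousAt.2 fun _ ↦ (continuousWithinAt_univ _ _).1 <|
    hs.continuousWithinAt.sub_section ht.continuousWithinAt

theorem ContinuousOn.smul_section {s : ∀ x, E x} {f : B → ℝ} {u : Set B} (hf : ContinuousOn f u)
    (hs : ContinuousOn (fun x ↦ TotalSpace.mk' F x (s x)) u) :
    ContinuousOn (fun x ↦ TotalSpace.mk' F x (f x • s x)) u :=
  fun x hx ↦ (hf x hx).smul_section (hs x hx)

theorem PartitionOfUnity.IsSubordinate.continuous_finsum_smul_section {ι : Type*} {s : Set B}
    {ρ : PartitionOfUnity ι B s} {U : ι → Set B} (ho : ∀ i, IsOpen (U i))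
    (hρ : ρ.IsSubordinate U) {t : ι → ∀ x, E x}
    (ht : ∀ i, ContinuousOn (fun x ↦ TotalSpace.mk' F x (t i x)) (U i)) :
    Continuous fun x ↦ TotalSpace.mk' F x (∑ᶠ i, ρ i x • t i x) := by
  refine continuous_iff_continuousAt.2 fun x₀ ↦ ?_
  have hterm : ∀ i ∈ ρ.fintsupport x₀,
      ContinuousAt (fun x ↦ TotalSpace.mk' F x (ρ i x • t i x)) x₀ := fun i hi ↦
    ((ρ i).continuous.continuousOn.smul_section (ht i)).continuousAt
      ((ho i).mem_nhds (hρ i ((ρ.mem_fintsupport_iff x₀ i).1 hi)))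
  refine (ContinuousAt.sum_section hterm).congr ?_
  filter_upwards [ρ.eventually_finsupport_subset x₀] with x hx
  refine congrArg (TotalSpace.mk' F x) (finsum_eq_sum_of_support_subset _ ?_).symm
  exact (Function.support_smul_subset_left (fun i ↦ ρ i x) (fun i ↦ t i x)).trans <|
    (ρ.coe_finsupport x).symm.subset.trans (Finset.coe_subset.2 hx)

theorem exists_continuous_section_forall_mem_convex_of_local [NormalSpace B] [ParacompactSpace B]
    {t : ∀ x, Set (E x)} (ht : ∀ x, Convex ℝ (t x))
    (H : ∀ x : B, ∃ U ∈ 𝓝 x, ∃ s : ∀ x, E x,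
      ContinuousOn (fun x ↦ TotalSpace.mk' F x (s x)) U ∧ ∀ y ∈ U, s y ∈ t y) :
    ∃ s : ∀ x, E x, (Continuous fun x ↦ TotalSpace.mk' F x (s x)) ∧ ∀ x, s x ∈ t x := by
  choose U hU s hsc hst using H
  obtain ⟨ρ, hρ⟩ := PartitionOfUnity.exists_isSubordinate isClosed_univ (fun x ↦ interior (U x))
    (fun _ ↦ isOpen_interior) fun x _ ↦ mem_iUnion.2 ⟨x, mem_interior_iff_mem_nhds.2 (hU x)⟩
  refine ⟨fun x ↦ ∑ᶠ i, ρ i x • s i x,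
    hρ.continuous_finsum_smul_section (fun _ ↦ isOpen_interior)
      fun i ↦ (hsc i).mono interior_subset,
    fun x ↦ ρ.finsum_smul_mem_convex (g := fun i _ ↦ s i x) (mem_univ x)
      (fun i hi ↦ hst _ _ ?_) (ht x)⟩
  exact interior_subset (hρ i (subset_closure hi))

end ContinuousSection

/-- For continuous sections `f₁, f₂` of a topological vector bundle over a Hausdorff
paracompact base with a continuous grade `g`, local continuous factorizations of `f₂ − f₁`
through `g^r` near every zero of `g` are equivalent to a global continuous factorization. -/
theorem local_iff_global_contact_factorization_of_sections
    {M : Type*} [TopologicalSpace M] [T2Space M] [ParacompactSpace M]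
    (g : M → ℝ) (hg : Continuous g)
    {F : Type*} [NormedAddCommGroup F] [NormedSpace ℝ F]
    (E : M → Type*) [∀ x, AddCommGroup (E x)] [∀ x, Module ℝ (E x)]
    [TopologicalSpace (Bundle.TotalSpace F E)] [∀ x, TopologicalSpace (E x)]
    [FiberBundle F E] [VectorBundle ℝ F E]
    (r : ℕ) (f₁ f₂ : ∀ x, E x)
    (hf₁ : Continuous fun x => (⟨x, f₁ x⟩ : Bundle.TotalSpace F E))
    (hf₂ : Continuous fun x => (⟨x, f₂ x⟩ : Bundle.TotalSpace F E)) :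
    (∀ m₀ : M, g m₀ = 0 → ∃ U : Set M, IsOpen U ∧ m₀ ∈ U ∧
      ∃ δf : ∀ x, E x,
        ContinuousOn (fun x => (⟨x, δf x⟩ : Bundle.TotalSpace F E)) U ∧
        ∀ m ∈ U, f₂ m - f₁ m = g m ^ r • δf m) ↔
    (∃ δf : ∀ x, E x,
      Continuous (fun x => (⟨x, δf x⟩ : Bundle.TotalSpace F E)) ∧
      ∀ m : M, f₂ m - f₁ m = g m ^ r • δf m) := by
  constructor
  · intro hloc
    refine exists_continuous_section_forall_mem_convex_of_local
      (fun m ↦ convex_setOf_eq_smul (f₂ m - f₁ m) (g m ^ r)) fun m₀ ↦ ?_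
    by_cases hm₀ : g m₀ = 0
    · obtain ⟨U, hUo, hm₀U, δf, hδf, hfac⟩ := hloc m₀ hm₀
      exact ⟨U, hUo.mem_nhds hm₀U, δf, hδf, hfac⟩
    · refine ⟨{m | g m ≠ 0}, (isOpen_ne_fun hg continuous_const).mem_nhds hm₀,
        fun m ↦ (g m ^ r)⁻¹ • (f₂ m - f₁ m), ?_, fun m hm ↦ ?_⟩
      · exact ((hg.pow r).continuousOn.inv₀ fun m hm ↦ pow_ne_zero r hm).smul_section
          (hf₂.sub_section hf₁).continuousOn
      · rw [mem_ofPred_eq, smul_smul, mul_inv_cancel₀ (pow_ne_zero r hm), one_smul]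
  · rintro ⟨δf, hδf, hfac⟩ m₀ -
    exact ⟨univ, isOpen_univ, mem_univ m₀, δf, hδf.continuousOn, fun m _ ↦ hfac m⟩
end
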